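/- arXiv:2108.01772 — 10 statements merged into one kernel-verified Lean document; each statement's English description precedes it below -/
import Mathlib

section
/- Let A be a p×p real symmetric matrix and P an invertible p×p real matrix. Then for each k = 1,…,p, the k-th largest eigenvalue of PᵀAP lies between σ_p(P)²·λ_k(A) and σ_1(P)²·λ_k(A), where σ_1(P) and σ_p(P) are the largest and smallest singular values of P and λ_k denotes the k-th largest eigenvalue. Concretely: if λ_k(A) ≥ 0 then σ_p(P)²λ_k(A) ≤ λ_k(PᵀAP) ≤ σ_1(P)²λ_k(A), and if λ_k(A) < 0 then σ_1(P)²λ_k(A) ≤ λ_k(PᵀAP) ≤ σ_p(P)²λ_k(A). -/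
open Matrix
/-- The `k`-th largest eigenvalue (0-indexed: `k = 0` is the largest) of a
Hermitian (real symmetric) matrix. -/
noncomputable def eigval {n : ℕ} (A : Matrix (Fin n) (Fin n) ℝ) (hA : A.IsHermitian)
    (k : Fin n) : ℝ :=
  (hA.eigenvalues ∘ Tuple.sort hA.eigenvalues) k.rev

/-- The `k`-th largest singular value (0-indexed) of a real matrix `M`,
defined as the square root of the `k`-th largest eigenvalue of `Mᵀ * M`. -/
noncomputable def singval {m n : ℕ} (M : Matrix (Fin m) (Fin n) ℝ) (k : Fin n) : ℝ :=
  Real.sqrt (eigval (Mᵀ * M)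
    (by simpa [Matrix.conjTranspose_eq_transpose_of_trivial] using
      Matrix.isHermitian_conjTranspose_mul_self M) k)


open Module Submodule
noncomputable section Aux

variable {p : ℕ}

local notation "E" => EuclideanSpace ℝ (Fin p)

/-- span of the basis vectors indexed by a finset -/
def basSpan (w : OrthonormalBasis (Fin p) ℝ E) (s : Finset (Fin p)) : Submodule ℝ E :=
  Submodule.span ℝ (Set.range (fun i : {i // i ∈ s} => w i))

lemma basSpan_finrank (w : OrthonormalBasis (Fin p) ℝ E) (s : Finset (Fin p)) :
    finrank ℝ (basSpan w s) = s.card := by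
  rw [basSpan, finrank_span_eq_card (b := fun i : {i // i ∈ s} => w i)
    ((w.orthonormal.linearIndependent).comp Subtype.val Subtype.val_injective)]
  exact Fintype.card_coe s

lemma basSpan_inner_eq_zero (w : OrthonormalBasis (Fin p) ℝ E) (s : Finset (Fin p))
    {x : E} (hx : x ∈ basSpan w s) {i : Fin p} (hi : i ∉ s) :
    (inner ℝ (w i) x : ℝ) = 0 := by
  have hle : basSpan w s ≤ LinearMap.ker (innerSL ℝ (w i)).toLinearMap := by
    rw [basSpan, Submodule.span_le]
    rintro _ ⟨j, rfl⟩
    simp only [SetLike.mem_coe, LinearMap.mem_ker, ContinuousLinearMap.coe_coe, innerSL_apply_apply]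
    exact w.orthonormal.2 (fun h => hi (h ▸ j.2))
  simpa using hle hx

lemma quad_expansion (T : E →ₗ[ℝ] E) (w : OrthonormalBasis (Fin p) ℝ E) (μ : Fin p → ℝ)
    (hsym : ∀ x y : E, (inner ℝ (T x) y : ℝ) = inner ℝ x (T y))
    (heig : ∀ i, T (w i) = μ i • w i) (x : E) :
    (inner ℝ x (T x) : ℝ) = ∑ i, μ i * (inner ℝ (w i) x : ℝ) ^ 2 := by
  rw [← w.sum_inner_mul_inner x (T x)]
  refine Finset.sum_congr rfl fun i _ => ?_
  have h1 : (inner ℝ (w i) (T x) : ℝ) = μ i * inner ℝ (w i) x := by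
    rw [← hsym, heig, real_inner_smul_left]
  rw [h1, real_inner_comm x (w i)]; ring

lemma norm_expansion (w : OrthonormalBasis (Fin p) ℝ E) (x : E) :
    (inner ℝ x x : ℝ) = ∑ i, (inner ℝ (w i) x : ℝ) ^ 2 := by
  rw [← w.sum_inner_mul_inner x x]
  exact Finset.sum_congr rfl fun i _ => by rw [real_inner_comm x (w i)]; ring

/-- On the span of basis vectors whose eigenvalue is at least `c`, the quadratic form
is bounded below by `c`. -/
lemma quad_ge_on_span (T : E →ₗ[ℝ] E) (w : OrthonormalBasis (Fin p) ℝ E) (μ : Fin p → ℝ)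
    (hsym : ∀ x y : E, (inner ℝ (T x) y : ℝ) = inner ℝ x (T y))
    (heig : ∀ i, T (w i) = μ i • w i) (s : Finset (Fin p)) (c : ℝ)
    (hc : ∀ i ∈ s, c ≤ μ i) {x : E} (hx : x ∈ basSpan w s) :
    c * inner ℝ x x ≤ (inner ℝ x (T x) : ℝ) := by
  rw [quad_expansion T w μ hsym heig, norm_expansion w, Finset.mul_sum]
  refine Finset.sum_le_sum fun i _ => ?_
  by_cases hi : i ∈ s
  · exact mul_le_mul_of_nonneg_right (hc i hi) (sq_nonneg _)
  · rw [basSpan_inner_eq_zero w s hx hi]; simp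

lemma quad_le_on_span (T : E →ₗ[ℝ] E) (w : OrthonormalBasis (Fin p) ℝ E) (μ : Fin p → ℝ)
    (hsym : ∀ x y : E, (inner ℝ (T x) y : ℝ) = inner ℝ x (T y))
    (heig : ∀ i, T (w i) = μ i • w i) (s : Finset (Fin p)) (c : ℝ)
    (hc : ∀ i ∈ s, μ i ≤ c) {x : E} (hx : x ∈ basSpan w s) :
    (inner ℝ x (T x) : ℝ) ≤ c * inner ℝ x x := by
  have := quad_ge_on_span (-T) w (-μ) (by intro x y; simp [hsym x y]) (by intro i; simp [heig i])
    s (-c) (fun i hi => neg_le_neg (hc i hi)) hx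
  simp only [Pi.neg_apply, LinearMap.neg_apply, inner_neg_right, neg_mul] at this
  linarith

/-- Core one-sided Courant–Fischer style comparison. -/
lemma key_le (T : E →ₗ[ℝ] E) (w : OrthonormalBasis (Fin p) ℝ E) (μ : Fin p → ℝ)
    (hsym : ∀ x y : E, (inner ℝ (T x) y : ℝ) = inner ℝ x (T y))
    (heig : ∀ i, T (w i) = μ i • w i) (s : Finset (Fin p)) (c c' : ℝ)
    (hs : ∀ i ∈ s, μ i ≤ c) (S : Submodule ℝ E)
    (hdim : p < finrank ℝ S + s.card)
    (hS : ∀ x ∈ S, c' * inner ℝ x x ≤ (inner ℝ x (T x) : ℝ)) : c' ≤ c := by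
  have hW : finrank ℝ (basSpan w s) = s.card := basSpan_finrank w s
  have hfr : finrank ℝ E = p := by simp
  have hpos : 0 < finrank ℝ ↥(S ⊓ basSpan w s) := by
    have h1 := Submodule.finrank_sup_add_finrank_inf_eq S (basSpan w s)
    have h2 : finrank ℝ ↥(S ⊔ basSpan w s) ≤ p := by
      have := Submodule.finrank_le (S ⊔ basSpan w s)
      omega
    omega
  obtain ⟨x, hx, hx0⟩ := Submodule.exists_mem_ne_zero_of_ne_bot
    (p := S ⊓ basSpan w s) (fun h => by rw [h] at hpos; simp at hpos)
  have hxs : x ∈ S := hx.1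
  have hxW : x ∈ basSpan w s := hx.2
  have hupper : (inner ℝ x (T x) : ℝ) ≤ c * inner ℝ x x := quad_le_on_span T w μ hsym heig s c hs hxW
  have hlower := hS x hxs
  have hxx : (0:ℝ) < inner ℝ x x := by
    rcases lt_or_eq_of_le (real_inner_self_nonneg (x := x)) with h | h
    · exact h
    · exact absurd (inner_self_eq_zero.1 h.symm) hx0
  nlinarith

lemma key_ge (T : E →ₗ[ℝ] E) (w : OrthonormalBasis (Fin p) ℝ E) (μ : Fin p → ℝ)
    (hsym : ∀ x y : E, (inner ℝ (T x) y : ℝ) = inner ℝ x (T y))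
    (heig : ∀ i, T (w i) = μ i • w i) (s : Finset (Fin p)) (c c' : ℝ)
    (hs : ∀ i ∈ s, c ≤ μ i) (S : Submodule ℝ E)
    (hdim : p < finrank ℝ S + s.card)
    (hS : ∀ x ∈ S, (inner ℝ x (T x) : ℝ) ≤ c' * inner ℝ x x) : c ≤ c' := by
  have := key_le (-T) w (-μ) (by intro x y; simp [hsym x y]) (by intro i; simp [heig i])
    s (-c) (-c') (fun i hi => neg_le_neg (hs i hi)) S hdim
    (fun x hx => by
      have := hS x hx
      simp only [LinearMap.neg_apply, inner_neg_right, neg_mul]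
      linarith)
  linarith

end Aux

noncomputable section Herm

open Module

variable {p : ℕ}

local notation "E" => EuclideanSpace ℝ (Fin p)

/-- sorted (ascending) eigenvalues -/
def gg {M : Matrix (Fin p) (Fin p) ℝ} (hM : M.IsHermitian) : Fin p → ℝ :=
  hM.eigenvalues ∘ Tuple.sort hM.eigenvalues

/-- eigenbasis sorted accordingly -/
def ws {M : Matrix (Fin p) (Fin p) ℝ} (hM : M.IsHermitian) : OrthonormalBasis (Fin p) ℝ E :=
  hM.eigenvectorBasis.reindex (Tuple.sort hM.eigenvalues).symm

lemma gg_mono {M : Matrix (Fin p) (Fin p) ℝ} (hM : M.IsHermitian) : Monotone (gg hM) :=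
  Tuple.monotone_sort _

lemma hsym_of {M : Matrix (Fin p) (Fin p) ℝ} (hM : M.IsHermitian) (x y : E) :
    (inner ℝ (Matrix.toEuclideanLin M x) y : ℝ) = inner ℝ x (Matrix.toEuclideanLin M y) :=
  (Matrix.isHermitian_iff_isSymmetric.1 hM) x y

lemma heig_of {M : Matrix (Fin p) (Fin p) ℝ} (hM : M.IsHermitian) (i : Fin p) :
    Matrix.toEuclideanLin M (ws hM i) = gg hM i • ws hM i := by
  rw [ws, OrthonormalBasis.reindex_apply, Equiv.symm_symm]
  exact congrArg (WithLp.toLp 2) (hM.mulVec_eigenvectorBasis _)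

lemma le_eigval {M : Matrix (Fin p) (Fin p) ℝ} (hM : M.IsHermitian) (k : Fin p) (c' : ℝ)
    (S : Submodule ℝ E) (hr : (k : ℕ) + 1 ≤ finrank ℝ S)
    (hS : ∀ x ∈ S, c' * inner ℝ x x ≤ (inner ℝ x (Matrix.toEuclideanLin M x) : ℝ)) :
    c' ≤ gg hM k.rev := by
  refine key_le (Matrix.toEuclideanLin M) (ws hM) (gg hM) (hsym_of hM) (heig_of hM)
    (Finset.Iic k.rev) _ c' (fun i hi => gg_mono hM (Finset.mem_Iic.1 hi)) S ?_ hS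
  rw [Fin.card_Iic]
  have h1 := k.2
  have h2 : (k.rev : ℕ) = p - (k + 1) := Fin.val_rev k
  omega

lemma eigval_le {M : Matrix (Fin p) (Fin p) ℝ} (hM : M.IsHermitian) (k : Fin p) (c' : ℝ)
    (S : Submodule ℝ E) (hr : p - (k : ℕ) ≤ finrank ℝ S)
    (hS : ∀ x ∈ S, (inner ℝ x (Matrix.toEuclideanLin M x) : ℝ) ≤ c' * inner ℝ x x) :
    gg hM k.rev ≤ c' := by
  refine key_ge (Matrix.toEuclideanLin M) (ws hM) (gg hM) (hsym_of hM) (heig_of hM)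
    (Finset.Ici k.rev) _ c' (fun i hi => gg_mono hM (Finset.mem_Ici.1 hi)) S ?_ hS
  rw [Fin.card_Ici]
  have h1 := k.2
  have h2 : (k.rev : ℕ) = p - (k + 1) := Fin.val_rev k
  omega

lemma basSpan_univ (w : OrthonormalBasis (Fin p) ℝ E) : basSpan w Finset.univ = ⊤ := by
  rw [basSpan]
  have h : Set.range (fun i : {i // i ∈ (Finset.univ : Finset (Fin p))} => w i)
      = Set.range w := by
    ext y; constructor
    · rintro ⟨i, rfl⟩; exact ⟨i, rfl⟩
    · rintro ⟨i, rfl⟩; exact ⟨⟨i, Finset.mem_univ i⟩, rfl⟩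
  rw [h, ← w.coe_toBasis, w.toBasis.span_eq]

lemma pointwise_lb {M : Matrix (Fin p) (Fin p) ℝ} (hM : M.IsHermitian) (c : ℝ)
    (hc : ∀ i, c ≤ gg hM i) (x : E) :
    c * inner ℝ x x ≤ (inner ℝ x (Matrix.toEuclideanLin M x) : ℝ) := by
  refine quad_ge_on_span (Matrix.toEuclideanLin M) (ws hM) (gg hM) (hsym_of hM) (heig_of hM)
    Finset.univ _ (fun i _ => hc i) ?_
  rw [basSpan_univ]; trivial

lemma pointwise_ub {M : Matrix (Fin p) (Fin p) ℝ} (hM : M.IsHermitian) (c : ℝ)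
    (hc : ∀ i, gg hM i ≤ c) (x : E) :
    (inner ℝ x (Matrix.toEuclideanLin M x) : ℝ) ≤ c * inner ℝ x x := by
  refine quad_le_on_span (Matrix.toEuclideanLin M) (ws hM) (gg hM) (hsym_of hM) (heig_of hM)
    Finset.univ _ (fun i _ => hc i) ?_
  rw [basSpan_univ]; trivial

end Herm

noncomputable section Final

open Module

variable {p : ℕ}

local notation "E" => EuclideanSpace ℝ (Fin p)

lemma toE_mul (M N : Matrix (Fin p) (Fin p) ℝ) (x : E) :
    Matrix.toEuclideanLin (M * N) x = Matrix.toEuclideanLin M (Matrix.toEuclideanLin N x) := by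
  simp [Matrix.toEuclideanLin_apply, ← Matrix.mulVec_mulVec]

lemma quad_conj (A P : Matrix (Fin p) (Fin p) ℝ) (x : E) :
    (inner ℝ x (Matrix.toEuclideanLin (Pᵀ * A * P) x) : ℝ)
      = inner ℝ (Matrix.toEuclideanLin P x) (Matrix.toEuclideanLin A (Matrix.toEuclideanLin P x)) := by
  rw [toE_mul, toE_mul]
  rw [show Pᵀ = Pᴴ by simp [Matrix.conjTranspose_eq_transpose_of_trivial],
    Matrix.toEuclideanLin_conjTranspose_eq_adjoint, LinearMap.adjoint_inner_right]

lemma toE_one (x : E) : Matrix.toEuclideanLin (1 : Matrix (Fin p) (Fin p) ℝ) x = x := by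
  simp [Matrix.toEuclideanLin_apply]

lemma mulVec_inner_self_eq (P : Matrix (Fin p) (Fin p) ℝ) (x : E) :
    (inner ℝ (Matrix.toEuclideanLin P x) (Matrix.toEuclideanLin P x) : ℝ)
      = inner ℝ x (Matrix.toEuclideanLin (Pᵀ * P) x) := by
  have h := quad_conj 1 P x
  rw [Matrix.mul_one, toE_one] at h
  exact h.symm

/-- `toEuclideanLin P` as a linear equivalence, for invertible `P`. -/
def toEEquiv (P : Matrix (Fin p) (Fin p) ℝ) (hP : IsUnit P.det) : E ≃ₗ[ℝ] E :=
  LinearEquiv.ofLinear (Matrix.toEuclideanLin P) (Matrix.toEuclideanLin P⁻¹)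
    (by ext x; simp [← toE_mul, Matrix.mul_nonsing_inv P hP, toE_one])
    (by ext x; simp [← toE_mul, Matrix.nonsing_inv_mul P hP, toE_one])

lemma finrank_comap (P : Matrix (Fin p) (Fin p) ℝ) (hP : IsUnit P.det) (W : Submodule ℝ E) :
    finrank ℝ (W.comap (Matrix.toEuclideanLin P)) = finrank ℝ W := by
  have h := Submodule.comap_equiv_eq_map_symm (toEEquiv P hP) W
  rw [show (Matrix.toEuclideanLin P) = ((toEEquiv P hP : E ≃ₗ[ℝ] E) : E →ₗ[ℝ] E) from rfl, h,
    LinearEquiv.finrank_map_eq]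

end Final

lemma transpose_mul_mul_isHermitian {n : ℕ} {A : Matrix (Fin n) (Fin n) ℝ}
    (hA : A.IsHermitian) (P : Matrix (Fin n) (Fin n) ℝ) : (Pᵀ * A * P).IsHermitian := by
  simpa [Matrix.conjTranspose_eq_transpose_of_trivial] using
    Matrix.isHermitian_conjTranspose_mul_mul P hA

theorem stmt0 {p : ℕ} (A P : Matrix (Fin p) (Fin p) ℝ) (hA : A.IsHermitian)
    (hP : IsUnit P.det) (k : Fin p) :
    (0 ≤ eigval A hA k →
      singval P ⟨p - 1, Nat.sub_lt k.pos one_pos⟩ ^ 2 * eigval A hA k ≤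
          eigval (Pᵀ * A * P) (transpose_mul_mul_isHermitian hA P) k ∧
        eigval (Pᵀ * A * P) (transpose_mul_mul_isHermitian hA P) k ≤
          singval P ⟨0, k.pos⟩ ^ 2 * eigval A hA k) ∧
    (eigval A hA k < 0 →
      singval P ⟨0, k.pos⟩ ^ 2 * eigval A hA k ≤
          eigval (Pᵀ * A * P) (transpose_mul_mul_isHermitian hA P) k ∧
        eigval (Pᵀ * A * P) (transpose_mul_mul_isHermitian hA P) k ≤
          singval P ⟨p - 1, Nat.sub_lt k.pos one_pos⟩ ^ 2 * eigval A hA k) := by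
  have hp : 0 < p := k.pos
  have hB : (Pᵀ * A * P).IsHermitian := transpose_mul_mul_isHermitian hA P
  have hPPh : (Pᵀ * P).IsHermitian := by
    simpa [Matrix.conjTranspose_eq_transpose_of_trivial] using
      Matrix.isHermitian_conjTranspose_mul_self P
  have hPP_psd : (Pᵀ * P).PosSemidef := by
    simpa [Matrix.conjTranspose_eq_transpose_of_trivial] using
      Matrix.posSemidef_conjTranspose_mul_self P
  have hsq : ∀ j : Fin p, singval P j ^ 2 = eigval (Pᵀ * P) hPPh j := by
    intro j
    have hnn : 0 ≤ eigval (Pᵀ * P) hPPh j := hPP_psd.eigenvalues_nonneg _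
    exact Real.sq_sqrt hnn
  set jmin : Fin p := ⟨p - 1, Nat.sub_lt k.pos one_pos⟩ with hjmin
  set j0 : Fin p := ⟨0, k.pos⟩ with hj0
  -- pointwise singular value bounds
  have hmlb : ∀ x : EuclideanSpace ℝ (Fin p),
      eigval (Pᵀ * P) hPPh jmin * inner ℝ x x
        ≤ (inner ℝ (Matrix.toEuclideanLin P x) (Matrix.toEuclideanLin P x) : ℝ) := by
    intro x
    rw [mulVec_inner_self_eq]
    refine pointwise_lb hPPh _ (fun i => gg_mono hPPh ?_) x
    have hv : (jmin : ℕ) = p - 1 := rfl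
    rw [Fin.le_def, Fin.val_rev]
    omega
  have hMub : ∀ x : EuclideanSpace ℝ (Fin p),
      (inner ℝ (Matrix.toEuclideanLin P x) (Matrix.toEuclideanLin P x) : ℝ)
        ≤ eigval (Pᵀ * P) hPPh j0 * inner ℝ x x := by
    intro x
    rw [mulVec_inner_self_eq]
    refine pointwise_ub hPPh _ (fun i => gg_mono hPPh ?_) x
    have hv : (j0 : ℕ) = 0 := rfl
    rw [Fin.le_def, Fin.val_rev]
    have := i.2
    omega
  -- the two subspaces
  set WI := basSpan (ws hA) (Finset.Ici k.rev) with hWI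
  set Wc := basSpan (ws hA) (Finset.Iic k.rev) with hWc
  set SI := WI.comap (Matrix.toEuclideanLin P) with hSI
  set Sc := Wc.comap (Matrix.toEuclideanLin P) with hSc
  have hkrev : (k.rev : ℕ) = p - (k + 1) := Fin.val_rev k
  have hk2 := k.2
  have hrI : (k : ℕ) + 1 ≤ Module.finrank ℝ SI := by
    rw [hSI, finrank_comap P hP, hWI, basSpan_finrank, Fin.card_Ici]
    omega
  have hrc : p - (k : ℕ) ≤ Module.finrank ℝ Sc := by
    rw [hSc, finrank_comap P hP, hWc, basSpan_finrank, Fin.card_Iic]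
    omega
  -- quadratic form bounds on the subspaces
  have hgeI : ∀ x ∈ SI, eigval A hA k * (inner ℝ (Matrix.toEuclideanLin P x)
      (Matrix.toEuclideanLin P x) : ℝ) ≤
      (inner ℝ x (Matrix.toEuclideanLin (Pᵀ * A * P) x) : ℝ) := by
    intro x hx
    rw [quad_conj]
    exact quad_ge_on_span (Matrix.toEuclideanLin A) (ws hA) (gg hA) (hsym_of hA) (heig_of hA)
      (Finset.Ici k.rev) _ (fun i hi => gg_mono hA (Finset.mem_Ici.1 hi))
      (Submodule.mem_comap.1 hx)
  have hlec : ∀ x ∈ Sc, (inner ℝ x (Matrix.toEuclideanLin (Pᵀ * A * P) x) : ℝ) ≤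
      eigval A hA k * (inner ℝ (Matrix.toEuclideanLin P x) (Matrix.toEuclideanLin P x) : ℝ) := by
    intro x hx
    rw [quad_conj]
    exact quad_le_on_span (Matrix.toEuclideanLin A) (ws hA) (gg hA) (hsym_of hA) (heig_of hA)
      (Finset.Iic k.rev) _ (fun i hi => gg_mono hA (Finset.mem_Iic.1 hi))
      (Submodule.mem_comap.1 hx)
  constructor
  · intro hl0
    constructor
    · rw [hsq jmin]
      refine le_eigval hB k _ SI hrI (fun x hx => ?_)
      calc eigval (Pᵀ * P) hPPh jmin * eigval A hA k * inner ℝ x x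
          = eigval A hA k * (eigval (Pᵀ * P) hPPh jmin * inner ℝ x x) := by ring
        _ ≤ eigval A hA k * inner ℝ (Matrix.toEuclideanLin P x) (Matrix.toEuclideanLin P x) :=
            mul_le_mul_of_nonneg_left (hmlb x) hl0
        _ ≤ _ := hgeI x hx
    · rw [hsq j0]
      refine eigval_le hB k _ Sc hrc (fun x hx => ?_)
      calc (inner ℝ x (Matrix.toEuclideanLin (Pᵀ * A * P) x) : ℝ)
          ≤ eigval A hA k * inner ℝ (Matrix.toEuclideanLin P x) (Matrix.toEuclideanLin P x) :=
            hlec x hx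
        _ ≤ eigval A hA k * (eigval (Pᵀ * P) hPPh j0 * inner ℝ x x) :=
            mul_le_mul_of_nonneg_left (hMub x) hl0
        _ = eigval (Pᵀ * P) hPPh j0 * eigval A hA k * inner ℝ x x := by ring
  · intro hl0
    constructor
    · rw [hsq j0]
      refine le_eigval hB k _ SI hrI (fun x hx => ?_)
      calc eigval (Pᵀ * P) hPPh j0 * eigval A hA k * inner ℝ x x
          = eigval A hA k * (eigval (Pᵀ * P) hPPh j0 * inner ℝ x x) := by ring
        _ ≤ eigval A hA k * inner ℝ (Matrix.toEuclideanLin P x) (Matrix.toEuclideanLin P x) := by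
            have h2 : (inner ℝ (Matrix.toEuclideanLin P x) (Matrix.toEuclideanLin P x) : ℝ)
                ≤ eigval (Pᵀ * P) hPPh j0 * inner ℝ x x := hMub x
            nlinarith
        _ ≤ _ := hgeI x hx
    · rw [hsq jmin]
      refine eigval_le hB k _ Sc hrc (fun x hx => ?_)
      calc (inner ℝ x (Matrix.toEuclideanLin (Pᵀ * A * P) x) : ℝ)
          ≤ eigval A hA k * inner ℝ (Matrix.toEuclideanLin P x) (Matrix.toEuclideanLin P x) :=
            hlec x hx
        _ ≤ eigval A hA k * (eigval (Pᵀ * P) hPPh jmin * inner ℝ x x) := by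
            have h2 := hmlb x
            nlinarith
        _ = eigval (Pᵀ * P) hPPh jmin * eigval A hA k * inner ℝ x x := by ring
end

section
/- Let A be a p×p real symmetric matrix, B a q×q real symmetric matrix with q ≥ p, and P ∈ ℝ^{q×p}. If PᵀBP ⪰ A (i.e., PᵀBP − A is positive semidefinite), then for each k = 1,…,p: max(λ_k(B)·σ_1(P)², λ_k(B)·σ_p(P)²) ≥ λ_k(A). -/
open Matrix

section Aux
open Matrix Finset

lemma quad_expand {n : ℕ} {M : Matrix (Fin n) (Fin n) ℝ} (hM : M.IsHermitian)
    (x : EuclideanSpace ℝ (Fin n)) :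
    x ⬝ᵥ M *ᵥ x = ∑ j, hM.eigenvalues j * (hM.eigenvectorBasis.repr x j)^2 := by
  set b := hM.eigenvectorBasis with hb
  have hsum := b.sum_repr x
  have hbj : ∀ j, Matrix.toEuclideanLin M (b j) = hM.eigenvalues j • b j := by
    intro j
    rw [Matrix.toEuclideanLin_apply]
    have : M *ᵥ (b j).ofLp = hM.eigenvalues j • ⇑(b j) :=
      hM.mulVec_eigenvectorBasis j
    rw [this, WithLp.toLp_smul]
  have key : Matrix.toEuclideanLin M x = ∑ j, b.repr x j • (hM.eigenvalues j • b j) := by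
    conv_lhs => rw [← hsum]
    rw [map_sum]
    exact Finset.sum_congr rfl fun j _ => by rw [_root_.map_smul, hbj j]
  have h0 : x ⬝ᵥ M *ᵥ x = (inner ℝ x (Matrix.toEuclideanLin M x) : ℝ) := by
    rw [EuclideanSpace.inner_eq_star_dotProduct, Matrix.toEuclideanLin_apply, dotProduct_comm]; simp
  rw [h0, key, inner_sum]
  refine Finset.sum_congr rfl fun j _ => ?_
  rw [real_inner_smul_right, real_inner_smul_right, real_inner_comm]
  rw [← b.repr_apply_apply x j]
  ring

lemma norm_expand {n : ℕ} {M : Matrix (Fin n) (Fin n) ℝ} (hM : M.IsHermitian)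
    (x : EuclideanSpace ℝ (Fin n)) :
    x ⬝ᵥ x = ∑ j, (hM.eigenvectorBasis.repr x j)^2 := by
  set b := hM.eigenvectorBasis with hb
  have h1 : (x ⬝ᵥ x : ℝ) = (inner ℝ x x : ℝ) := rfl
  have h2 : (inner ℝ x x : ℝ) = (inner ℝ (b.repr x) (b.repr x) : ℝ) :=
    (b.repr.inner_map_map x x).symm
  have h3 : (inner ℝ (b.repr x) (b.repr x) : ℝ) = (b.repr x) ⬝ᵥ (b.repr x) := rfl
  rw [h1, h2, h3]
  simp [dotProduct, sq]

lemma repr_zero {n : ℕ} {M : Matrix (Fin n) (Fin n) ℝ} (hM : M.IsHermitian)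
    {ι : Type} (f : ι → Fin n) (x : EuclideanSpace ℝ (Fin n))
    (hx : x ∈ Submodule.span ℝ (Set.range fun i => hM.eigenvectorBasis (f i)))
    (j : Fin n) (hj : ∀ i, f i ≠ j) : hM.eigenvectorBasis.repr x j = 0 := by
  set b := hM.eigenvectorBasis
  have : Submodule.span ℝ (Set.range fun i => b (f i)) ≤
      LinearMap.ker ((EuclideanSpace.proj j : EuclideanSpace ℝ (Fin n) →L[ℝ] ℝ).toLinearMap.comp (b.repr.toLinearEquiv.toLinearMap)) := by
    rw [Submodule.span_le]
    rintro _ ⟨i, rfl⟩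
    simp only [SetLike.mem_coe, LinearMap.mem_ker, LinearMap.comp_apply, LinearMap.proj_apply]
    show b.repr (b (f i)) j = 0
    rw [b.repr_self]
    simp [EuclideanSpace.single_apply]
    exact fun h => hj i h.symm
  exact this hx

lemma quad_ge {n : ℕ} {M : Matrix (Fin n) (Fin n) ℝ} (hM : M.IsHermitian)
    {ι : Type} (f : ι → Fin n) (c : ℝ) (hc : ∀ i, c ≤ hM.eigenvalues (f i))
    (x : EuclideanSpace ℝ (Fin n))
    (hx : x ∈ Submodule.span ℝ (Set.range fun i => hM.eigenvectorBasis (f i))) :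
    c * (x ⬝ᵥ x) ≤ x ⬝ᵥ M *ᵥ x := by
  rw [quad_expand hM x, norm_expand hM x, Finset.mul_sum]
  refine Finset.sum_le_sum fun j _ => ?_
  by_cases hj : ∃ i, f i = j
  · obtain ⟨i, rfl⟩ := hj
    exact mul_le_mul_of_nonneg_right (hc i) (sq_nonneg _)
  · push_neg at hj
    rw [repr_zero hM f x hx j hj]
    simp

lemma quad_le {n : ℕ} {M : Matrix (Fin n) (Fin n) ℝ} (hM : M.IsHermitian)
    {ι : Type} (f : ι → Fin n) (c : ℝ) (hc : ∀ i, hM.eigenvalues (f i) ≤ c)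
    (x : EuclideanSpace ℝ (Fin n))
    (hx : x ∈ Submodule.span ℝ (Set.range fun i => hM.eigenvectorBasis (f i))) :
    x ⬝ᵥ M *ᵥ x ≤ c * (x ⬝ᵥ x) := by
  rw [quad_expand hM x, norm_expand hM x, Finset.mul_sum]
  refine Finset.sum_le_sum fun j _ => ?_
  by_cases hj : ∃ i, f i = j
  · obtain ⟨i, rfl⟩ := hj
    exact mul_le_mul_of_nonneg_right (hc i) (sq_nonneg _)
  · push_neg at hj
    rw [repr_zero hM f x hx j hj]
    simp

lemma exists_ne_zero_mem_inf {E : Type*} [AddCommGroup E] [Module ℝ E]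
    [FiniteDimensional ℝ E] (V W : Submodule ℝ E)
    (h : Module.finrank ℝ E < Module.finrank ℝ V + Module.finrank ℝ W) :
    ∃ x : E, x ≠ 0 ∧ x ∈ V ∧ x ∈ W := by
  have hs := Submodule.finrank_sup_add_finrank_inf_eq V W
  have hle : Module.finrank ℝ ↥(V ⊔ W) ≤ Module.finrank ℝ E := Submodule.finrank_le _
  have hpos : 0 < Module.finrank ℝ ↥(V ⊓ W) := by omega
  obtain ⟨⟨x, hx⟩, hx0⟩ := Module.finrank_pos_iff_exists_ne_zero.mp hpos
  exact ⟨x, by simpa [Submodule.mk_eq_zero] using hx0, hx.1, hx.2⟩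

lemma finrank_comap_ge {E F : Type*} [AddCommGroup E] [Module ℝ E] [AddCommGroup F]
    [Module ℝ F] [FiniteDimensional ℝ E] [FiniteDimensional ℝ F]
    (f : E →ₗ[ℝ] F) (W : Submodule ℝ F) :
    Module.finrank ℝ E + Module.finrank ℝ W ≤
      Module.finrank ℝ (W.comap f) + Module.finrank ℝ F := by
  have h1 := LinearMap.finrank_range_add_finrank_ker (W.mkQ.comp f)
  have h2 : LinearMap.ker (W.mkQ.comp f) = W.comap f := by
    rw [LinearMap.ker_comp, Submodule.ker_mkQ]
  have h3 : Module.finrank ℝ (LinearMap.range (W.mkQ.comp f)) ≤ Module.finrank ℝ (F ⧸ W) :=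
    Submodule.finrank_le _
  rw [h2] at h1
  have h4 := Submodule.finrank_quotient_add_finrank W
  omega

end Aux

theorem stmt1 {p q : ℕ} (hpq : p ≤ q) (A : Matrix (Fin p) (Fin p) ℝ)
    (B : Matrix (Fin q) (Fin q) ℝ) (P : Matrix (Fin q) (Fin p) ℝ)
    (hA : A.IsHermitian) (hB : B.IsHermitian)
    (hle : (Pᵀ * B * P - A).PosSemidef) (k : Fin p) :
    eigval A hA k ≤
      max (eigval B hB ⟨k, lt_of_lt_of_le k.isLt hpq⟩ * singval P ⟨0, k.pos⟩ ^ 2)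
        (eigval B hB ⟨k, lt_of_lt_of_le k.isLt hpq⟩ *
          singval P ⟨p - 1, Nat.sub_lt k.pos one_pos⟩ ^ 2) := by
  have hp : 0 < p := k.pos
  set kq : Fin q := ⟨k, lt_of_lt_of_le k.isLt hpq⟩ with hkq
  set gA := Tuple.sort hA.eigenvalues with hgA
  set gB := Tuple.sort hB.eigenvalues with hgB
  have hPtP : (Pᵀ * P).IsHermitian := by
    simpa [Matrix.conjTranspose_eq_transpose_of_trivial] using
      Matrix.isHermitian_conjTranspose_mul_self P
  set gP := Tuple.sort hPtP.eigenvalues with hgP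
  -- the three subspaces
  set VA : Submodule ℝ (EuclideanSpace ℝ (Fin p)) :=
    Submodule.span ℝ (Set.range fun i : (Finset.Ici k.rev) => hA.eigenvectorBasis (gA i.1))
    with hVA
  set WB : Submodule ℝ (EuclideanSpace ℝ (Fin q)) :=
    Submodule.span ℝ (Set.range fun j : (Finset.Iic kq.rev) => hB.eigenvectorBasis (gB j.1))
    with hWB
  set U : Submodule ℝ (EuclideanSpace ℝ (Fin p)) := WB.comap (Matrix.toEuclideanLin P) with hU
  -- dimensions
  have hcardA : Fintype.card (Finset.Ici k.rev) = k + 1 := by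
    rw [Fintype.card_coe, Fin.card_Ici]
    have := Fin.val_rev k
    have := k.isLt
    omega
  have hdimVA : Module.finrank ℝ VA = k + 1 := by
    rw [hVA]
    have hinj : Function.Injective (fun i : (Finset.Ici k.rev) => gA i.1) :=
      fun a b hab => Subtype.ext (gA.injective hab)
    exact (finrank_span_eq_card
      ((hA.eigenvectorBasis.orthonormal.comp _ hinj).linearIndependent)).trans hcardA
  have hcardB : Fintype.card (Finset.Iic kq.rev) = q - k := by
    rw [Fintype.card_coe, Fin.card_Iic]
    have := Fin.val_rev kq
    have := kq.isLt
    have hk : (kq : ℕ) = k := rfl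
    omega
  have hdimWB : Module.finrank ℝ WB = q - k := by
    rw [hWB]
    have hinj : Function.Injective (fun j : (Finset.Iic kq.rev) => gB j.1) :=
      fun a b hab => Subtype.ext (gB.injective hab)
    exact (finrank_span_eq_card
      ((hB.eigenvectorBasis.orthonormal.comp _ hinj).linearIndependent)).trans hcardB
  have hdimU : p - k ≤ Module.finrank ℝ U := by
    have := finrank_comap_ge (Matrix.toEuclideanLin P) WB
    rw [← hU, hdimWB] at this
    rw [finrank_euclideanSpace_fin] at this
    rw [finrank_euclideanSpace_fin] at this
    omega
  -- a nonzero common vector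
  obtain ⟨x, hx0, hxV, hxU⟩ := exists_ne_zero_mem_inf VA U (by
    rw [finrank_euclideanSpace_fin, hdimVA]
    have := k.isLt
    omega)
  set y : EuclideanSpace ℝ (Fin q) := Matrix.toEuclideanLin P x with hy
  have hyW : y ∈ WB := hxU
  have hyx : (P *ᵥ (x : Fin p → ℝ) : Fin q → ℝ) = (y : Fin q → ℝ) := rfl
  -- positivity of the norm
  have ht : (0:ℝ) < x ⬝ᵥ x := by
    have h1 : (x ⬝ᵥ x : ℝ) = (inner ℝ x x : ℝ) := rfl
    rw [h1, real_inner_self_eq_norm_sq]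
    exact pow_pos (norm_pos_iff.mpr hx0) 2
  -- step 1 : eigval A * ‖x‖² ≤ xᵀAx
  have step1 : eigval A hA k * (x ⬝ᵥ x) ≤ x ⬝ᵥ A *ᵥ x := by
    refine quad_ge hA (fun i : (Finset.Ici k.rev) => gA i.1) _ ?_ x hxV
    intro i
    exact Tuple.monotone_sort hA.eigenvalues (Finset.mem_Ici.mp i.2)
  -- step 2 : xᵀAx ≤ xᵀPᵀBPx
  have step2 : x ⬝ᵥ A *ᵥ x ≤ x ⬝ᵥ (Pᵀ * B * P) *ᵥ x := by
    have h := hle.dotProduct_mulVec_nonneg (x : Fin p → ℝ)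
    rw [star_trivial, Matrix.sub_mulVec, dotProduct_sub] at h
    linarith
  -- step 3 : xᵀPᵀBPx = yᵀBy
  have step3 : x ⬝ᵥ (Pᵀ * B * P) *ᵥ x = y ⬝ᵥ B *ᵥ y := by
    rw [← hyx, ← Matrix.mulVec_mulVec, ← Matrix.mulVec_mulVec, Matrix.dotProduct_mulVec (v := (x : Fin p → ℝ)),
      Matrix.vecMul_transpose]
  -- step 4 : yᵀBy ≤ eigval B * ‖y‖²
  have step4 : y ⬝ᵥ B *ᵥ y ≤ eigval B hB kq * (y ⬝ᵥ y) := by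
    refine quad_le hB (fun j : (Finset.Iic kq.rev) => gB j.1) _ ?_ y hyW
    intro j
    exact Tuple.monotone_sort hB.eigenvalues (Finset.mem_Iic.mp j.2)
  -- step 5 : ‖y‖² = xᵀ(PᵀP)x
  have step5 : y ⬝ᵥ y = x ⬝ᵥ (Pᵀ * P) *ᵥ x := by
    rw [← hyx, ← Matrix.mulVec_mulVec, Matrix.dotProduct_mulVec (v := (x : Fin p → ℝ)),
      Matrix.vecMul_transpose]
  -- full span for PᵀP
  have hspanP : ∀ z : EuclideanSpace ℝ (Fin p),
      z ∈ Submodule.span ℝ (Set.range fun i : Fin p => hPtP.eigenvectorBasis (gP i)) := by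
    intro z
    have : (Set.range fun i : Fin p => hPtP.eigenvectorBasis (gP i)) =
        Set.range hPtP.eigenvectorBasis := by
      rw [show (fun i : Fin p => hPtP.eigenvectorBasis (gP i)) = hPtP.eigenvectorBasis ∘ gP from
        rfl, gP.surjective.range_comp _]
    rw [this]
    have := hPtP.eigenvectorBasis.toBasis.span_eq
    rw [OrthonormalBasis.coe_toBasis] at this
    rw [this]
    trivial
  -- step 6 : σₚ² ‖x‖² ≤ ‖y‖² ≤ σ₁² ‖x‖²
  have step6a : y ⬝ᵥ y ≤ eigval (Pᵀ * P) hPtP ⟨0, hp⟩ * (x ⬝ᵥ x) := by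
    rw [step5]
    refine quad_le hPtP (fun i : Fin p => gP i) _ ?_ x (hspanP x)
    intro i
    refine Tuple.monotone_sort hPtP.eigenvalues ?_
    show i ≤ Fin.rev ⟨0, hp⟩
    have h1 := Fin.val_rev (⟨0, hp⟩ : Fin p)
    have h0 : ((⟨0, hp⟩ : Fin p) : ℕ) = 0 := rfl
    have := i.isLt
    exact Fin.le_def.mpr (by omega)
  have step6b : eigval (Pᵀ * P) hPtP ⟨p - 1, Nat.sub_lt hp one_pos⟩ * (x ⬝ᵥ x) ≤ y ⬝ᵥ y := by
    rw [step5]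
    refine quad_ge hPtP (fun i : Fin p => gP i) _ ?_ x (hspanP x)
    intro i
    refine Tuple.monotone_sort hPtP.eigenvalues ?_
    show Fin.rev ⟨p - 1, Nat.sub_lt hp one_pos⟩ ≤ i
    have h1 := Fin.val_rev (⟨p - 1, Nat.sub_lt hp one_pos⟩ : Fin p)
    have h0 : ((⟨p - 1, Nat.sub_lt hp one_pos⟩ : Fin p) : ℕ) = p - 1 := rfl
    exact Fin.le_def.mpr (by omega)
  -- singular values squared
  have hsv1 : singval P ⟨0, k.pos⟩ ^ 2 = eigval (Pᵀ * P) hPtP ⟨0, hp⟩ := by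
    rw [singval, Real.sq_sqrt]
    have hpsd : (Pᵀ * P).PosSemidef := by
      simpa [Matrix.conjTranspose_eq_transpose_of_trivial] using
        Matrix.posSemidef_conjTranspose_mul_self P
    exact hpsd.eigenvalues_nonneg _
  have hsv2 : singval P ⟨p - 1, Nat.sub_lt k.pos one_pos⟩ ^ 2 =
      eigval (Pᵀ * P) hPtP ⟨p - 1, Nat.sub_lt hp one_pos⟩ := by
    rw [singval, Real.sq_sqrt]
    have hpsd : (Pᵀ * P).PosSemidef := by
      simpa [Matrix.conjTranspose_eq_transpose_of_trivial] using
        Matrix.posSemidef_conjTranspose_mul_self P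
    exact hpsd.eigenvalues_nonneg _
  -- combine
  have main : eigval A hA k * (x ⬝ᵥ x) ≤ eigval B hB kq * (y ⬝ᵥ y) :=
    le_trans step1 (le_trans step2 (le_trans (le_of_eq step3) step4))
  rcases le_or_gt 0 (eigval B hB kq) with hBpos | hBneg
  · refine le_trans ?_ (le_max_left _ _)
    rw [hsv1]
    have h2 : eigval B hB kq * (y ⬝ᵥ y) ≤
        eigval B hB kq * (eigval (Pᵀ * P) hPtP ⟨0, hp⟩ * (x ⬝ᵥ x)) :=
      mul_le_mul_of_nonneg_left step6a hBpos
    have h3 : eigval A hA k * (x ⬝ᵥ x) ≤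
        (eigval B hB kq * eigval (Pᵀ * P) hPtP ⟨0, hp⟩) * (x ⬝ᵥ x) := by
      rw [mul_assoc]; exact le_trans main h2
    exact le_of_mul_le_mul_right h3 ht
  · refine le_trans ?_ (le_max_right _ _)
    rw [hsv2]
    have h2 : eigval B hB kq * (y ⬝ᵥ y) ≤
        eigval B hB kq * (eigval (Pᵀ * P) hPtP ⟨p - 1, Nat.sub_lt hp one_pos⟩ * (x ⬝ᵥ x)) :=
      mul_le_mul_of_nonpos_left step6b (le_of_lt hBneg)
    have h3 : eigval A hA k * (x ⬝ᵥ x) ≤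
        (eigval B hB kq * eigval (Pᵀ * P) hPtP ⟨p - 1, Nat.sub_lt hp one_pos⟩) * (x ⬝ᵥ x) := by
      rw [mul_assoc]; exact le_trans main h2
    exact le_of_mul_le_mul_right h3 ht
end

section
/- Suppose L ∈ ℝ^{p1×r} and R ∈ ℝ^{p2×r} both have rank r and satisfy LᵀL = RᵀR. Let UΣVᵀ be a (compact, rank-r) singular value decomposition of LRᵀ, with U ∈ ℝ^{p1×r}, V ∈ ℝ^{p2×r} having orthonormal columns and Σ ∈ ℝ^{r×r} diagonal with positive entries. Then there exists an invertible r×r matrix P with PPᵀ = Σ such that L = UP and R = VP. -/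
open Matrix

lemma aux_isUnit_of_rank {r : ℕ} (M : Matrix (Fin r) (Fin r) ℝ) (h : M.rank = r) :
    IsUnit M := by
  rw [← Matrix.mulVec_surjective_iff_isUnit]
  have htop : LinearMap.range M.mulVecLin = ⊤ := by
    apply Submodule.eq_top_of_finrank_eq
    rw [← Matrix.rank, h]
    simp
  intro y
  obtain ⟨x, hx⟩ := LinearMap.range_eq_top.mp htop y
  exact ⟨x, hx⟩

theorem stmt6 {p1 p2 r : ℕ}
    (L : Matrix (Fin p1) (Fin r) ℝ) (R : Matrix (Fin p2) (Fin r) ℝ)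
    (hL : L.rank = r) (hR : R.rank = r) (hbal : Lᵀ * L = Rᵀ * R)
    (U : Matrix (Fin p1) (Fin r) ℝ) (V : Matrix (Fin p2) (Fin r) ℝ)
    (Sg : Matrix (Fin r) (Fin r) ℝ)
    (hU : Uᵀ * U = 1) (hV : Vᵀ * V = 1)
    (hdiag : ∀ i j, i ≠ j → Sg i j = 0) (hpos : ∀ i, 0 < Sg i i)
    (hSVD : L * Rᵀ = U * Sg * Vᵀ) :
    ∃ P : Matrix (Fin r) (Fin r) ℝ,
      IsUnit P.det ∧ P * Pᵀ = Sg ∧ L = U * P ∧ R = V * P := by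
  classical
  obtain ⟨M, hMdef⟩ : ∃ M : Matrix (Fin r) (Fin r) ℝ, M = Lᵀ * L := ⟨_, rfl⟩
  have hMrank : M.rank = r := by rw [hMdef, Matrix.rank_transpose_mul_self, hL]
  have hMunit : IsUnit M := aux_isUnit_of_rank M hMrank
  have hdetM : IsUnit M.det := (Matrix.isUnit_iff_isUnit_det M).mp hMunit
  have hMMi : M * M⁻¹ = 1 := Matrix.mul_nonsing_inv M hdetM
  have hSgT : Sgᵀ = Sg := by
    ext i j
    by_cases h : i = j
    · subst h; rfl
    · rw [Matrix.transpose_apply, hdiag j i (Ne.symm h), hdiag i j h]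
  obtain ⟨A, hAdef⟩ : ∃ A : Matrix (Fin r) (Fin r) ℝ, A = Sg * Vᵀ * R * M⁻¹ := ⟨_, rfl⟩
  obtain ⟨B, hBdef⟩ : ∃ B : Matrix (Fin r) (Fin r) ℝ, B = Sg * Uᵀ * L * M⁻¹ := ⟨_, rfl⟩
  have hLU : L = U * A := by
    have h1 : L * M = U * Sg * Vᵀ * R := by
      rw [hMdef, hbal, ← Matrix.mul_assoc, hSVD]
    calc L = L * (M * M⁻¹) := by rw [hMMi, Matrix.mul_one]
      _ = L * M * M⁻¹ := by rw [Matrix.mul_assoc]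
      _ = U * Sg * Vᵀ * R * M⁻¹ := by rw [h1]
      _ = U * A := by rw [hAdef]; simp only [Matrix.mul_assoc]
  have hRV : R = V * B := by
    have hRL : R * Lᵀ = V * Sg * Uᵀ := by
      have h := congrArg Matrix.transpose hSVD
      simpa [Matrix.transpose_mul, Matrix.transpose_transpose, hSgT,
        Matrix.mul_assoc] using h
    have h1 : R * M = V * Sg * Uᵀ * L := by
      rw [hMdef, ← Matrix.mul_assoc, hRL]
    calc R = R * (M * M⁻¹) := by rw [hMMi, Matrix.mul_one]
      _ = R * M * M⁻¹ := by rw [Matrix.mul_assoc]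
      _ = V * Sg * Uᵀ * L * M⁻¹ := by rw [h1]
      _ = V * B := by rw [hBdef]; simp only [Matrix.mul_assoc]
  have hAAM : Aᵀ * A = M := by
    rw [hMdef, hLU]
    calc Aᵀ * A = Aᵀ * 1 * A := by rw [Matrix.mul_one]
      _ = Aᵀ * (Uᵀ * U) * A := by rw [hU]
      _ = (U * A)ᵀ * (U * A) := by
          simp only [Matrix.transpose_mul, Matrix.mul_assoc]
  have hBBM : Bᵀ * B = M := by
    rw [hMdef, hbal, hRV]
    calc Bᵀ * B = Bᵀ * 1 * B := by rw [Matrix.mul_one]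
      _ = Bᵀ * (Vᵀ * V) * B := by rw [hV]
      _ = (V * B)ᵀ * (V * B) := by
          simp only [Matrix.transpose_mul, Matrix.mul_assoc]
  have hABt : A * Bᵀ = Sg := by
    have key : U * (A * (Bᵀ * Vᵀ)) = U * (Sg * Vᵀ) := by
      have h := hSVD
      rw [hLU, hRV] at h
      simpa only [Matrix.transpose_mul, Matrix.mul_assoc] using h
    have key1 : A * Bᵀ * Vᵀ = Sg * Vᵀ := by
      have h := congrArg (fun X => Uᵀ * X) key
      simp only [← Matrix.mul_assoc] at h
      rwa [hU, Matrix.one_mul, Matrix.one_mul] at h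
    have h2 := congrArg (fun X => X * V) key1
    simp only [Matrix.mul_assoc] at h2
    rwa [hV, Matrix.mul_one, Matrix.mul_one] at h2
  have hSgPSD : Sg.PosSemidef := by
    have hsgd : Sg = Matrix.diagonal (fun i => Sg i i) := by
      ext i j
      by_cases h : i = j
      · subst h; simp
      · rw [hdiag i j h, Matrix.diagonal_apply_ne _ h]
    rw [hsgd]
    exact Matrix.posSemidef_diagonal_iff.mpr fun i => (hpos i).le
  have hAAtPSD : (A * Aᵀ).PosSemidef := by
    have h := Matrix.posSemidef_self_mul_conjTranspose A
    rwa [Matrix.conjTranspose_eq_transpose_of_trivial] at h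
  have hsq : (A * Aᵀ) ^ 2 = Sg ^ 2 := by
    have h1 : Sg ^ 2 = A * Aᵀ * (A * Aᵀ) := by
      calc Sg ^ 2 = Sg * Sgᵀ := by rw [pow_two, hSgT]
        _ = (A * Bᵀ) * (A * Bᵀ)ᵀ := by rw [hABt]
        _ = A * (Bᵀ * B) * Aᵀ := by
            simp only [Matrix.transpose_mul, Matrix.transpose_transpose,
              Matrix.mul_assoc]
        _ = A * (Aᵀ * A) * Aᵀ := by rw [hBBM, ← hAAM]
        _ = A * Aᵀ * (A * Aᵀ) := by simp only [Matrix.mul_assoc]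
    rw [pow_two, h1]
  have hAAt : A * Aᵀ = Sg := by
    open scoped MatrixOrder in
    exact (CFC.sq_eq_sq_iff (A * Aᵀ) Sg hAAtPSD.nonneg hSgPSD.nonneg).mp hsq
  have hdetA : IsUnit A.det := by
    have h1 : M.det = A.det * A.det := by
      rw [← hAAM, Matrix.det_mul, Matrix.det_transpose]
    have h2 : IsUnit (A.det * A.det) := h1 ▸ hdetM
    exact isUnit_of_mul_isUnit_left h2
  have hAB : A = B := by
    have h1 : A * Aᵀ = A * Bᵀ := by rw [hAAt, hABt]
    have h2 : Aᵀ = Bᵀ := by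
      calc Aᵀ = A⁻¹ * (A * Aᵀ) := by
            rw [← Matrix.mul_assoc, Matrix.nonsing_inv_mul A hdetA, Matrix.one_mul]
        _ = A⁻¹ * (A * Bᵀ) := by rw [h1]
        _ = Bᵀ := by
            rw [← Matrix.mul_assoc, Matrix.nonsing_inv_mul A hdetA, Matrix.one_mul]
    calc A = Aᵀᵀ := (Matrix.transpose_transpose A).symm
      _ = Bᵀᵀ := by rw [h2]
      _ = B := Matrix.transpose_transpose B
  exact ⟨A, hdetA, hAAt, hLU, by rw [hRV, hAB]⟩
end

section
/- Let Σ be an r×r diagonal matrix with strictly positive diagonal entries and let S be an r×r symmetric matrix. Then the system of matrix equations S̄Σ^{-1} = Σ^{-1}S̄ᵀ and S̄ + S̄ᵀ = S has a unique solution S̄ ∈ ℝ^{r×r}, given entrywise by S̄_{ij} = S_{ij}·Σ_{jj}/(Σ_{ii} + Σ_{jj}). -/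
open Matrix

theorem stmt7 {r : ℕ} (Sg : Matrix (Fin r) (Fin r) ℝ)
    (hdiag : ∀ i j, i ≠ j → Sg i j = 0) (hpos : ∀ i, 0 < Sg i i)
    (S : Matrix (Fin r) (Fin r) ℝ) (hS : Sᵀ = S) :
    (((Matrix.of fun i j => S i j * Sg j j / (Sg i i + Sg j j)) * Sg⁻¹ =
        Sg⁻¹ * (Matrix.of fun i j => S i j * Sg j j / (Sg i i + Sg j j))ᵀ) ∧
      (Matrix.of fun i j => S i j * Sg j j / (Sg i i + Sg j j)) +
          (Matrix.of fun i j => S i j * Sg j j / (Sg i i + Sg j j))ᵀ = S) ∧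
    ∀ T : Matrix (Fin r) (Fin r) ℝ,
      T * Sg⁻¹ = Sg⁻¹ * Tᵀ → T + Tᵀ = S →
        T = Matrix.of fun i j => S i j * Sg j j / (Sg i i + Sg j j) := by
  have hne : ∀ i, Sg i i ≠ 0 := fun i => (hpos i).ne'
  have hsum : ∀ i j : Fin r, Sg i i + Sg j j ≠ 0 :=
    fun i j => (add_pos (hpos i) (hpos j)).ne'
  set D : Matrix (Fin r) (Fin r) ℝ :=
    Matrix.of fun i j => if i = j then (Sg i i)⁻¹ else 0 with hD
  have hSgD : Sg * D = 1 := by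
    ext i j
    simp only [Matrix.mul_apply, hD, Matrix.of_apply, Matrix.one_apply]
    rw [Finset.sum_eq_single j]
    · by_cases h : i = j
      · subst h; simp [hne i]
      · simp [h, hdiag i j h]
    · intro k _ hk
      simp [hk]
    · simp
  have hinv : Sg⁻¹ = D := Matrix.inv_eq_right_inv hSgD
  have hmulD : ∀ (A : Matrix (Fin r) (Fin r) ℝ) i j,
      (A * D) i j = A i j * (Sg j j)⁻¹ := by
    intro A i j
    simp only [Matrix.mul_apply, hD, Matrix.of_apply]
    rw [Finset.sum_eq_single j] <;> simp +contextual [fun k (h : ¬ k = j) => h]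
  have hDmul : ∀ (A : Matrix (Fin r) (Fin r) ℝ) i j,
      (D * A) i j = (Sg i i)⁻¹ * A i j := by
    intro A i j
    simp only [Matrix.mul_apply, hD, Matrix.of_apply]
    rw [Finset.sum_eq_single i] <;> simp +contextual [eq_comm]
  have hSsym : ∀ i j, S j i = S i j := fun i j => (congrFun (congrFun hS j) i).symm
  refine ⟨⟨?_, ?_⟩, ?_⟩
  · rw [hinv]
    ext i j
    rw [hmulD, hDmul]
    simp only [Matrix.of_apply, Matrix.transpose_apply]
    rw [hSsym i j]
    have hx := hne i; have hy := hne j; have hxy := hsum i j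
    rw [add_comm (Sg j j) (Sg i i)]
    field_simp
  · ext i j
    simp only [Matrix.add_apply, Matrix.of_apply, Matrix.transpose_apply]
    rw [hSsym i j, add_comm (Sg j j) (Sg i i)]
    have hxy := hsum i j
    field_simp
    ring
  · intro T h1 h2
    rw [hinv] at h1
    ext i j
    have e1 : T i j * (Sg j j)⁻¹ = (Sg i i)⁻¹ * T j i := by
      have := congrFun (congrFun h1 i) j
      rwa [hmulD, hDmul] at this
    have e2 : T i j + T j i = S i j := congrFun (congrFun h2 i) j
    have e1' : T i j * Sg i i = T j i * Sg j j := by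
      rw [← div_eq_mul_inv, inv_mul_eq_div, div_eq_div_iff (hne j) (hne i)] at e1
      exact e1
    have e2' : (T i j + T j i) * Sg j j = S i j * Sg j j := by rw [e2]
    show T i j = S i j * Sg j j / (Sg i i + Sg j j)
    rw [eq_div_iff (hsum i j)]
    linear_combination e1' + e2'
end

section
/- Let Σ be an r×r diagonal matrix with strictly positive entries and let S ∈ ℝ^{r×r} satisfy SΣ^{-1} = Σ^{-1}Sᵀ. Then ⟨Sᵀ, S⟩ ≥ 0, i.e., trace(S·S) ≥ 0. -/
open Matrix

theorem stmt8 {r : ℕ} (Sg : Matrix (Fin r) (Fin r) ℝ)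
    (hdiag : ∀ i j, i ≠ j → Sg i j = 0) (hpos : ∀ i, 0 < Sg i i)
    (S : Matrix (Fin r) (Fin r) ℝ) (hcomm : S * Sg⁻¹ = Sg⁻¹ * Sᵀ) :
    0 ≤ (S * S).trace := by
  set d : Fin r → ℝ := fun i => Sg i i with hd
  have hSg : Sg = Matrix.diagonal d := by
    ext i j
    by_cases h : i = j
    · subst h; simp [Matrix.diagonal, hd]
    · simp [Matrix.diagonal, h, hdiag i j h]
  have hne : ∀ i, d i ≠ 0 := fun i => (hpos i).ne'
  have hinv : Sg⁻¹ = Matrix.diagonal (fun i => (d i)⁻¹) := by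
    apply Matrix.inv_eq_right_inv
    rw [hSg, Matrix.diagonal_mul_diagonal]
    convert Matrix.diagonal_one using 2
    funext i
    exact mul_inv_cancel₀ (hne i)
  rw [hinv] at hcomm
  have key : ∀ i j, S j i = d i * S i j * (d j)⁻¹ := by
    intro i j
    have h1 := congrFun (congrFun hcomm i) j
    simp [Matrix.mul_apply, Matrix.diagonal, Matrix.transpose_apply,
      Finset.sum_ite_eq, Finset.sum_ite_eq'] at h1
    field_simp [hne i, hne j] at h1 ⊢
    linarith [h1]
  have : (S * S).trace = ∑ i, ∑ j, S i j * S j i := by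
    simp [Matrix.trace, Matrix.diag, Matrix.mul_apply]
  rw [this]
  apply Finset.sum_nonneg
  intro i _
  apply Finset.sum_nonneg
  intro j _
  rw [key i j]
  have : S i j * (d i * S i j * (d j)⁻¹) = (S i j)^2 * (d i * (d j)⁻¹) := by ring
  rw [this]
  exact mul_nonneg (sq_nonneg _) (mul_nonneg (hpos i).le (inv_nonneg.2 (hpos j).le))
end

section
/- Let P1 ∈ ℝ^{r×r} and P2 ∈ ℝ^{r×r} be invertible matrices. Then the linear map φ : ℝ^{r×r} → ℝ^{r×r} defined by φ(S) = P1ᵀ S P2^{-ᵀ} + P1^{-1} S P2 is a bijection. -/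
open Matrix

theorem stmt9 {r : ℕ} (P1 P2 : Matrix (Fin r) (Fin r) ℝ)
    (hP1 : IsUnit P1.det) (hP2 : IsUnit P2.det) :
    Function.Bijective (fun S : Matrix (Fin r) (Fin r) ℝ =>
      P1ᵀ * S * (P2⁻¹)ᵀ + P1⁻¹ * S * P2) := by
  set f : Matrix (Fin r) (Fin r) ℝ →ₗ[ℝ] Matrix (Fin r) (Fin r) ℝ :=
    { toFun := fun S => P1ᵀ * S * (P2⁻¹)ᵀ + P1⁻¹ * S * P2
      map_add' := by intro S T; noncomm_ring
      map_smul' := by intro c S; simp [Matrix.mul_smul, Matrix.smul_mul]; } with hf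
  show Function.Bijective f
  have hA : (P1 * P1ᵀ).PosSemidef := by
    simpa using posSemidef_self_mul_conjTranspose P1
  have hB : ((P2 * P2ᵀ)ᵀ).PosSemidef := by
    simpa using (posSemidef_self_mul_conjTranspose P2).transpose
  have hAdet : IsUnit (P1 * P1ᵀ).det := by
    rw [det_mul, det_transpose]; exact hP1.mul hP1
  have hinj : Function.Injective f := by
    rw [injective_iff_map_eq_zero]
    intro S hS
    have hS' : P1ᵀ * S * (P2⁻¹)ᵀ + P1⁻¹ * S * P2 = 0 := hS
    -- multiply on the left by P1 and on the right by P2ᵀ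
    have key : (P1 * P1ᵀ) * S + S * (P2 * P2ᵀ) = 0 := by
      have h2 : (P2⁻¹)ᵀ * P2ᵀ = 1 := by
        rw [← transpose_mul, mul_nonsing_inv _ hP2, transpose_one]
      have h1 : P1 * P1⁻¹ = 1 := mul_nonsing_inv _ hP1
      calc (P1 * P1ᵀ) * S + S * (P2 * P2ᵀ)
          = P1 * (P1ᵀ * S * (P2⁻¹)ᵀ + P1⁻¹ * S * P2) * P2ᵀ := by
            simp only [Matrix.mul_add, Matrix.add_mul, Matrix.mul_assoc, h2, Matrix.mul_one,
              Matrix.mul_nonsing_inv_cancel_left _ _ hP1]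
        _ = 0 := by rw [hS', Matrix.mul_zero, Matrix.zero_mul]
    set A := P1 * P1ᵀ
    set B := P2 * P2ᵀ
    have hentry : ∀ i k, (A * S) i k + (S * B) i k = 0 := by
      intro i k
      have := congrFun (congrFun key i) k
      simpa using this
    -- trace identity
    have hsum : (∑ j, (fun k => S k j) ⬝ᵥ (A *ᵥ fun k => S k j)) +
        (∑ i, (S i) ⬝ᵥ (Bᵀ *ᵥ S i)) = 0 := by
      have e1 : (∑ j, (fun k => S k j) ⬝ᵥ (A *ᵥ fun k => S k j)) =
          ∑ i, ∑ k, S i k * (A * S) i k := by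
        rw [Finset.sum_comm]
        simp [dotProduct, mulVec, Matrix.mul_apply]
      have e2 : (∑ i, (S i) ⬝ᵥ (Bᵀ *ᵥ S i)) = ∑ i, ∑ k, S i k * (S * B) i k := by
        refine Finset.sum_congr rfl fun i _ => ?_
        simp only [dotProduct, mulVec, Matrix.mul_apply, transpose_apply, Finset.mul_sum]
        refine Finset.sum_congr rfl fun k _ => Finset.sum_congr rfl fun l _ => by ring
      rw [e1, e2, ← Finset.sum_add_distrib]
      refine Finset.sum_eq_zero fun i _ => ?_
      rw [← Finset.sum_add_distrib]
      refine Finset.sum_eq_zero fun k _ => ?_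
      rw [← mul_add, hentry, mul_zero]
    have hF : ∀ j, 0 ≤ (fun k => S k j) ⬝ᵥ (A *ᵥ fun k => S k j) := by
      intro j
      simpa using hA.dotProduct_mulVec_nonneg (fun k => S k j)
    have hG : ∀ i, 0 ≤ (S i) ⬝ᵥ (Bᵀ *ᵥ S i) := by
      intro i
      simpa using hB.dotProduct_mulVec_nonneg (S i)
    have hFsum : (∑ j, (fun k => S k j) ⬝ᵥ (A *ᵥ fun k => S k j)) = 0 := by
      have h1 : 0 ≤ ∑ j, (fun k => S k j) ⬝ᵥ (A *ᵥ fun k => S k j) :=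
        Finset.sum_nonneg fun j _ => hF j
      have h2 : 0 ≤ ∑ i, (S i) ⬝ᵥ (Bᵀ *ᵥ S i) :=
        Finset.sum_nonneg fun i _ => hG i
      linarith
    have hFzero : ∀ j, (fun k => S k j) ⬝ᵥ (A *ᵥ fun k => S k j) = 0 := by
      intro j
      have := (Finset.sum_eq_zero_iff_of_nonneg (fun j _ => hF j)).mp hFsum
      exact this j (Finset.mem_univ j)
    -- each column of S is zero
    ext i j
    have hcol : A *ᵥ (fun k => S k j) = 0 := by
      have := (hA.dotProduct_mulVec_zero_iff (fun k => S k j)).mp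
      simp only [star_trivial] at this
      exact this (hFzero j)
    have : (fun k => S k j) = 0 := by
      have h := congrArg (fun v => A⁻¹ *ᵥ v) hcol
      simpa [mulVec_mulVec, nonsing_inv_mul _ hAdet] using h
    simpa using congrFun this i
  exact ⟨hinj, LinearMap.injective_iff_surjective.mp hinj⟩
end

section
/- Let Y ∈ ℝ^{p×r} have rank r, let X = YYᵀ have compact eigendecomposition X = UΣUᵀ with U ∈ ℝ^{p×r}, UᵀU = I_r, Σ diagonal positive, and set P = UᵀY. Then for any ξ in the set {[U U⊥][[S, Dᵀ],[D, 0]][U U⊥]ᵀ : S symmetric r×r, D ∈ ℝ^{(p−r)×r}} (the tangent space of the rank-r PSD manifold at X), the solution set {A ∈ ℝ^{p×r} : YAᵀ + AYᵀ = ξ} equals {A = (US₁ + U⊥D)P^{-ᵀ} : S₁ ∈ ℝ^{r×r}, S₁ + S₁ᵀ = S}. -/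
open Matrix

theorem stmt11 {p r : ℕ} (Y : Matrix (Fin p) (Fin r) ℝ) (hY : Y.rank = r)
    (U : Matrix (Fin p) (Fin r) ℝ) (Uperp : Matrix (Fin p) (Fin (p - r)) ℝ)
    (Sg : Matrix (Fin r) (Fin r) ℝ)
    (hU : Uᵀ * U = 1) (hUperp : Uperpᵀ * Uperp = 1) (hUUp : Uᵀ * Uperp = 0)
    (hcomp : U * Uᵀ + Uperp * Uperpᵀ = 1)
    (hdiag : ∀ i j, i ≠ j → Sg i j = 0) (hpos : ∀ i, 0 < Sg i i)
    (hX : Y * Yᵀ = U * Sg * Uᵀ)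
    (hP : IsUnit (Uᵀ * Y).det)
    (S : Matrix (Fin r) (Fin r) ℝ) (hS : Sᵀ = S)
    (D : Matrix (Fin (p - r)) (Fin r) ℝ) :
    {A : Matrix (Fin p) (Fin r) ℝ |
        Y * Aᵀ + A * Yᵀ = U * S * Uᵀ + Uperp * D * Uᵀ + U * Dᵀ * Uperpᵀ} =
      {A : Matrix (Fin p) (Fin r) ℝ | ∃ S1 : Matrix (Fin r) (Fin r) ℝ,
        S1 + S1ᵀ = S ∧ A = (U * S1 + Uperp * D) * ((Uᵀ * Y)⁻¹)ᵀ} := by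
  set P : Matrix (Fin r) (Fin r) ℝ := Uᵀ * Y with hPdef
  have hUpU : Uperpᵀ * U = 0 := by
    have := congrArg Matrix.transpose hUUp
    simpa using this
  -- Uperpᵀ * Y = 0
  have hUpY : Uperpᵀ * Y = 0 := by
    have h1 : (Uperpᵀ * Y) * (Uperpᵀ * Y)ᵀ = 0 := by
      have : (Uperpᵀ * Y) * (Uperpᵀ * Y)ᵀ = Uperpᵀ * (Y * Yᵀ) * Uperp := by
        simp [Matrix.transpose_mul, Matrix.mul_assoc]
      rw [this, hX]
      rw [show Uperpᵀ * (U * Sg * Uᵀ) * Uperp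
          = (Uperpᵀ * U) * (Sg * (Uᵀ * Uperp)) by
        simp [Matrix.mul_assoc]]
      rw [hUpU]
      simp
    have h2 : (Uperpᵀ * Y) * (Uperpᵀ * Y)ᴴ = 0 := by
      rw [Matrix.conjTranspose_eq_transpose_of_trivial]; exact h1
    exact Matrix.self_mul_conjTranspose_eq_zero.mp h2
  have hYUP : Y = U * P := by
    have : (U * Uᵀ + Uperp * Uperpᵀ) * Y = Y := by rw [hcomp, Matrix.one_mul]
    calc Y = (U * Uᵀ + Uperp * Uperpᵀ) * Y := this.symm
    _ = U * (Uᵀ * Y) + Uperp * (Uperpᵀ * Y) := by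
        simp [Matrix.add_mul, Matrix.mul_assoc]
    _ = U * P := by rw [hUpY, hPdef]; simp
  have hPinv : P * P⁻¹ = 1 := Matrix.mul_nonsing_inv P hP
  have hPinv' : P⁻¹ * P = 1 := Matrix.nonsing_inv_mul P hP
  have hPT : Pᵀ * (P⁻¹)ᵀ = 1 := by
    rw [← Matrix.transpose_mul, hPinv']; simp
  have hPT' : (P⁻¹)ᵀ * Pᵀ = 1 := by
    rw [← Matrix.transpose_mul, hPinv]; simp
  ext A
  simp only [Set.mem_setOf_eq]
  constructor
  · intro hA
    refine ⟨Uᵀ * A * Pᵀ, ?_, ?_⟩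
    · -- multiply hA by Uᵀ on left and U on right
      have := congrArg (fun M => Uᵀ * M * U) hA
      rw [hYUP] at this
      have lhs : Uᵀ * (U * P * Aᵀ + A * (U * P)ᵀ) * U
          = P * Aᵀ * U + Uᵀ * A * Pᵀ := by
        simp [Matrix.add_mul, Matrix.mul_add, Matrix.transpose_mul,
          Matrix.mul_assoc, hU,
          show ∀ (M : Matrix (Fin r) (Fin p) ℝ), Uᵀ * (U * M) = M by
            intro M; rw [← Matrix.mul_assoc, hU, Matrix.one_mul]]
      have rhs : Uᵀ * (U * S * Uᵀ + Uperp * D * Uᵀ + U * Dᵀ * Uperpᵀ) * U = S := by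
        have e1 : Uᵀ * (U * S * Uᵀ) * U = S := by
          rw [show Uᵀ * (U * S * Uᵀ) * U = (Uᵀ * U) * S * (Uᵀ * U) by
            simp [Matrix.mul_assoc], hU]; simp
        have e2 : Uᵀ * (Uperp * D * Uᵀ) * U = 0 := by
          rw [show Uᵀ * (Uperp * D * Uᵀ) * U = (Uᵀ * Uperp) * D * (Uᵀ * U) by
            simp [Matrix.mul_assoc], hUUp]; simp
        have e3 : Uᵀ * (U * Dᵀ * Uperpᵀ) * U = 0 := by
          rw [show Uᵀ * (U * Dᵀ * Uperpᵀ) * U = (Uᵀ * U) * Dᵀ * (Uperpᵀ * U) by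
            simp [Matrix.mul_assoc], hUpU]; simp
        simp [Matrix.mul_add, Matrix.add_mul, e1, e2, e3]
      rw [lhs, rhs] at this
      have : Uᵀ * A * Pᵀ + P * Aᵀ * U = S := by
        rw [add_comm]; exact this
      calc Uᵀ * A * Pᵀ + (Uᵀ * A * Pᵀ)ᵀ
          = Uᵀ * A * Pᵀ + P * Aᵀ * U := by
            simp [Matrix.transpose_mul, Matrix.mul_assoc]
        _ = S := this
    · -- Uperpᵀ * A * Pᵀ = D
      have hD : Uperpᵀ * A * Pᵀ = D := by
        have := congrArg (fun M => Uperpᵀ * M * U) hA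
        rw [hYUP] at this
        have lhs : Uperpᵀ * (U * P * Aᵀ + A * (U * P)ᵀ) * U
            = Uperpᵀ * A * Pᵀ := by
          rw [Matrix.mul_add, Matrix.add_mul]
          rw [show Uperpᵀ * (U * P * Aᵀ) * U = (Uperpᵀ * U) * (P * Aᵀ * U) by
            simp [Matrix.mul_assoc], hUpU]
          rw [show Uperpᵀ * (A * (U * P)ᵀ) * U
              = Uperpᵀ * A * (Pᵀ * (Uᵀ * U)) by
            simp [Matrix.transpose_mul, Matrix.mul_assoc], hU]
          simp [Matrix.mul_assoc]
        have rhs : Uperpᵀ * (U * S * Uᵀ + Uperp * D * Uᵀ + U * Dᵀ * Uperpᵀ) * U = D := by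
          have e1 : Uperpᵀ * (U * S * Uᵀ) * U = 0 := by
            rw [show Uperpᵀ * (U * S * Uᵀ) * U = (Uperpᵀ * U) * S * (Uᵀ * U) by
              simp [Matrix.mul_assoc], hUpU]; simp
          have e2 : Uperpᵀ * (Uperp * D * Uᵀ) * U = D := by
            rw [show Uperpᵀ * (Uperp * D * Uᵀ) * U = (Uperpᵀ * Uperp) * D * (Uᵀ * U) by
              simp [Matrix.mul_assoc], hUperp, hU]; simp
          have e3 : Uperpᵀ * (U * Dᵀ * Uperpᵀ) * U = 0 := by
            rw [show Uperpᵀ * (U * Dᵀ * Uperpᵀ) * U = (Uperpᵀ * U) * Dᵀ * (Uperpᵀ * U) by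
              simp [Matrix.mul_assoc], hUpU]; simp
          simp [Matrix.mul_add, Matrix.add_mul, e1, e2, e3]
        rw [lhs, rhs] at this
        exact this
      calc A = (U * Uᵀ + Uperp * Uperpᵀ) * A := by rw [hcomp, Matrix.one_mul]
        _ = U * (Uᵀ * A) + Uperp * (Uperpᵀ * A) := by
            simp [Matrix.add_mul, Matrix.mul_assoc]
        _ = U * (Uᵀ * A * Pᵀ * (P⁻¹)ᵀ) + Uperp * (Uperpᵀ * A * Pᵀ * (P⁻¹)ᵀ) := by
            rw [Matrix.mul_assoc (Uᵀ * A) Pᵀ, hPT, Matrix.mul_assoc (Uperpᵀ * A) Pᵀ, hPT]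
            simp
        _ = (U * (Uᵀ * A * Pᵀ) + Uperp * D) * (P⁻¹)ᵀ := by
            rw [hD]; simp [Matrix.add_mul, Matrix.mul_assoc]
  · rintro ⟨S1, hS1, rfl⟩
    rw [hYUP]
    have key : ((U * S1 + Uperp * D) * (P⁻¹)ᵀ)ᵀ
        = P⁻¹ * (S1ᵀ * Uᵀ + Dᵀ * Uperpᵀ) := by
      simp [Matrix.transpose_add, Matrix.transpose_mul, Matrix.mul_add,
        Matrix.transpose_nonsing_inv]
    rw [key]
    have lhs1 : U * P * (P⁻¹ * (S1ᵀ * Uᵀ + Dᵀ * Uperpᵀ))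
        = U * S1ᵀ * Uᵀ + U * Dᵀ * Uperpᵀ := by
      rw [show U * P * (P⁻¹ * (S1ᵀ * Uᵀ + Dᵀ * Uperpᵀ))
          = U * ((P * P⁻¹) * (S1ᵀ * Uᵀ + Dᵀ * Uperpᵀ)) by
        simp [Matrix.mul_assoc], hPinv]
      simp [Matrix.mul_add, Matrix.mul_assoc]
    have lhs2 : (U * S1 + Uperp * D) * (P⁻¹)ᵀ * (U * P)ᵀ
        = U * S1 * Uᵀ + Uperp * D * Uᵀ := by
      rw [show (U * S1 + Uperp * D) * (P⁻¹)ᵀ * (U * P)ᵀ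
          = (U * S1 + Uperp * D) * (((P⁻¹)ᵀ * Pᵀ) * Uᵀ) by
        simp [Matrix.transpose_mul, Matrix.mul_assoc], hPT']
      simp [Matrix.add_mul, Matrix.mul_assoc]
    rw [lhs1, lhs2]
    have : U * S1ᵀ * Uᵀ + U * S1 * Uᵀ = U * S * Uᵀ := by
      rw [← hS1]; simp [Matrix.mul_add, Matrix.add_mul, add_comm]
    calc U * S1ᵀ * Uᵀ + U * Dᵀ * Uperpᵀ + (U * S1 * Uᵀ + Uperp * D * Uᵀ)
        = (U * S1ᵀ * Uᵀ + U * S1 * Uᵀ) + Uperp * D * Uᵀ + U * Dᵀ * Uperpᵀ := by abel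
      _ = U * S * Uᵀ + Uperp * D * Uᵀ + U * Dᵀ * Uperpᵀ := by rw [this]
end

section
/- Let Y ∈ ℝ^{p×r} have rank r, X = YYᵀ = UΣUᵀ (compact eigendecomposition), P = UᵀY. Define 𝒜_null = {USP^{-ᵀ} : S + Sᵀ = 0} and 𝒜_n̄ull = {(US + U⊥D)P^{-ᵀ} : D ∈ ℝ^{(p−r)×r}, SΣ^{-1} symmetric}. Then 𝒜_null ⊥ 𝒜_n̄ull (with respect to the trace inner product on ℝ^{p×r}), dim(𝒜_null) = (r²−r)/2, dim(𝒜_n̄ull) = pr − (r²−r)/2, and ℝ^{p×r} = 𝒜_null ⊕ 𝒜_n̄ull. -/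
open Matrix

def skewK (r : ℕ) : Submodule ℝ (Matrix (Fin r) (Fin r) ℝ) where
  carrier := {S | S + Sᵀ = 0}
  add_mem' := by
    intro a b ha hb
    simp only [Set.mem_setOf_eq] at *
    rw [transpose_add]
    calc a + b + (aᵀ + bᵀ) = (a + aᵀ) + (b + bᵀ) := by abel
    _ = 0 := by rw [ha, hb, add_zero]
  zero_mem' := by simp
  smul_mem' := by
    intro c a ha
    simp only [Set.mem_setOf_eq] at *
    rw [transpose_smul, ← smul_add, ha, smul_zero]

theorem mem_skewK {r : ℕ} {S : Matrix (Fin r) (Fin r) ℝ} : S ∈ skewK r ↔ S + Sᵀ = 0 := Iff.rfl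

noncomputable def skewEquiv (r : ℕ) : (skewK r) ≃ₗ[ℝ] ((Σ i : Fin r, Fin i.val) → ℝ) where
  toFun S := fun q => (S : Matrix (Fin r) (Fin r) ℝ) q.1 ⟨q.2.1, lt_trans q.2.2 q.1.2⟩
  map_add' S T := by funext q; simp
  map_smul' c S := by funext q; simp
  invFun f := ⟨Matrix.of (fun i j =>
      if h : (j : ℕ) < (i : ℕ) then f ⟨i, ⟨j.1, h⟩⟩
      else if h' : (i : ℕ) < (j : ℕ) then -f ⟨j, ⟨i.1, h'⟩⟩ else 0), by
    show _ + _ = (0 : Matrix (Fin r) (Fin r) ℝ)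
    ext i j
    simp only [Matrix.add_apply, transpose_apply, Matrix.of_apply, Matrix.zero_apply]
    rcases lt_trichotomy (j : ℕ) (i : ℕ) with h | h | h
    · rw [dif_pos h, dif_neg (by omega), dif_pos h]; ring
    · rw [dif_neg (by omega), dif_neg (by omega), dif_neg (by omega), dif_neg (by omega)]; ring
    · rw [dif_neg (by omega), dif_pos h, dif_pos h]; ring⟩
  left_inv S := by
    apply Subtype.ext
    ext i j
    have hs : (S : Matrix (Fin r) (Fin r) ℝ) j i = -(S : Matrix (Fin r) (Fin r) ℝ) i j := by
      have := S.2
      replace this := mem_skewK.mp this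
      have h2 := congrFun (congrFun this j) i
      simp only [Matrix.add_apply, transpose_apply, Matrix.zero_apply] at h2
      linarith
    simp only [Matrix.of_apply]
    rcases lt_trichotomy (j : ℕ) (i : ℕ) with h | h | h
    · rw [dif_pos h]
    · rw [dif_neg (by omega), dif_neg (by omega)]
      have : i = j := Fin.ext h.symm
      subst this
      linarith [hs]
    · rw [dif_neg (by omega), dif_pos h, hs]; ring_nf
  right_inv f := by
    funext q
    obtain ⟨i, j⟩ := q
    simp only [Matrix.of_apply]
    rw [dif_pos j.2]

theorem finrank_skewK (r : ℕ) : Module.finrank ℝ (skewK r) = (r^2 - r)/2 := by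
  rw [(skewEquiv r).finrank_eq, Module.finrank_fintype_fun_eq_card, Fintype.card_sigma]
  simp only [Fintype.card_fin]
  rw [Fin.sum_univ_eq_sum_range (fun i => i) r, Finset.sum_range_id]
  congr 1
  cases r with
  | zero => simp
  | succ n => simp [pow_two, Nat.succ_sub_one, Nat.succ_mul, Nat.mul_succ]

theorem stmt12 {p r : ℕ} (Y : Matrix (Fin p) (Fin r) ℝ) (hY : Y.rank = r)
    (U : Matrix (Fin p) (Fin r) ℝ) (Uperp : Matrix (Fin p) (Fin (p - r)) ℝ)
    (Sg : Matrix (Fin r) (Fin r) ℝ)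
    (hU : Uᵀ * U = 1) (hUperp : Uperpᵀ * Uperp = 1) (hUUp : Uᵀ * Uperp = 0)
    (hcomp : U * Uᵀ + Uperp * Uperpᵀ = 1)
    (hdiag : ∀ i j, i ≠ j → Sg i j = 0) (hpos : ∀ i, 0 < Sg i i)
    (hrp : r ≤ p)
    (hX : Y * Yᵀ = U * Sg * Uᵀ) (hP : IsUnit (Uᵀ * Y).det) :
    (∀ A ∈ {A : Matrix (Fin p) (Fin r) ℝ | ∃ S : Matrix (Fin r) (Fin r) ℝ,
          S + Sᵀ = 0 ∧ A = U * S * ((Uᵀ * Y)⁻¹)ᵀ},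
      ∀ B ∈ {A : Matrix (Fin p) (Fin r) ℝ | ∃ S : Matrix (Fin r) (Fin r) ℝ,
          ∃ D : Matrix (Fin (p - r)) (Fin r) ℝ,
          S * Sg⁻¹ = Sg⁻¹ * Sᵀ ∧ A = (U * S + Uperp * D) * ((Uᵀ * Y)⁻¹)ᵀ},
        (Aᵀ * B).trace = 0) ∧
    Module.finrank ℝ (Submodule.span ℝ
        {A : Matrix (Fin p) (Fin r) ℝ | ∃ S : Matrix (Fin r) (Fin r) ℝ,
          S + Sᵀ = 0 ∧ A = U * S * ((Uᵀ * Y)⁻¹)ᵀ}) = (r ^ 2 - r) / 2 ∧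
    Module.finrank ℝ (Submodule.span ℝ
        {A : Matrix (Fin p) (Fin r) ℝ | ∃ S : Matrix (Fin r) (Fin r) ℝ,
          ∃ D : Matrix (Fin (p - r)) (Fin r) ℝ,
          S * Sg⁻¹ = Sg⁻¹ * Sᵀ ∧ A = (U * S + Uperp * D) * ((Uᵀ * Y)⁻¹)ᵀ}) =
      p * r - (r ^ 2 - r) / 2 ∧
    ∀ M : Matrix (Fin p) (Fin r) ℝ,
      ∃! AB : Matrix (Fin p) (Fin r) ℝ × Matrix (Fin p) (Fin r) ℝ,
        (∃ S : Matrix (Fin r) (Fin r) ℝ, S + Sᵀ = 0 ∧ AB.1 = U * S * ((Uᵀ * Y)⁻¹)ᵀ) ∧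
        (∃ S : Matrix (Fin r) (Fin r) ℝ, ∃ D : Matrix (Fin (p - r)) (Fin r) ℝ,
          S * Sg⁻¹ = Sg⁻¹ * Sᵀ ∧ AB.2 = (U * S + Uperp * D) * ((Uᵀ * Y)⁻¹)ᵀ) ∧
        M = AB.1 + AB.2 := by
  classical
  set P := Uᵀ * Y with hPdef
  set Q := (P⁻¹)ᵀ with hQdef
  -- basic matrix identities
  have hQP : Q * Pᵀ = 1 := by
    rw [hQdef, ← Matrix.transpose_mul, Matrix.mul_nonsing_inv _ hP, Matrix.transpose_one]
  have hPQ : Pᵀ * Q = 1 := by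
    rw [hQdef, ← Matrix.transpose_mul, Matrix.nonsing_inv_mul _ hP, Matrix.transpose_one]
  have hUpU : Uperpᵀ * U = 0 := by
    have := congrArg Matrix.transpose hUUp
    rwa [Matrix.transpose_mul, Matrix.transpose_transpose, Matrix.transpose_zero] at this
  have hPPT : P * Pᵀ = Sg := by
    calc P * Pᵀ = Uᵀ * (Y * Yᵀ) * U := by
          rw [hPdef, Matrix.transpose_mul, Matrix.transpose_transpose]
          simp only [Matrix.mul_assoc]
    _ = (Uᵀ * U) * Sg * (Uᵀ * U) := by rw [hX]; simp only [Matrix.mul_assoc]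
    _ = Sg := by rw [hU, one_mul, mul_one]
  have hSgd : Sg = Matrix.diagonal (fun i => Sg i i) := by
    ext i j
    by_cases h : i = j
    · subst h; simp
    · rw [Matrix.diagonal_apply_ne _ h, hdiag i j h]
  have hSgdet : IsUnit Sg.det := by
    rw [hSgd, Matrix.det_diagonal, isUnit_iff_ne_zero]
    exact ne_of_gt (Finset.prod_pos (fun i _ => hpos i))
  have hSgT : Sgᵀ = Sg := by
    rw [hSgd]; exact Matrix.diagonal_transpose _
  have hQQT : Q * Qᵀ = Sg⁻¹ := by
    rw [← hPPT, Matrix.mul_inv_rev, ← Matrix.transpose_nonsing_inv, hQdef,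
      Matrix.transpose_transpose]
  -- conversion between the two forms of the symmetry condition
  have hconv : ∀ S : Matrix (Fin r) (Fin r) ℝ,
      S * Sg⁻¹ = Sg⁻¹ * Sᵀ ↔ Sg * S = Sᵀ * Sg := by
    intro S
    constructor
    · intro hh
      calc Sg * S = Sg * S * (Sg⁻¹ * Sg) := by
            rw [Matrix.nonsing_inv_mul _ hSgdet, mul_one]
      _ = Sg * (S * Sg⁻¹) * Sg := by simp only [Matrix.mul_assoc]
      _ = Sg * (Sg⁻¹ * Sᵀ) * Sg := by rw [hh]
      _ = (Sg * Sg⁻¹) * (Sᵀ * Sg) := by simp only [Matrix.mul_assoc]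
      _ = Sᵀ * Sg := by rw [Matrix.mul_nonsing_inv _ hSgdet, one_mul]
    · intro hh
      calc S * Sg⁻¹ = (Sg⁻¹ * Sg) * S * Sg⁻¹ := by
            rw [Matrix.nonsing_inv_mul _ hSgdet, one_mul]
      _ = Sg⁻¹ * (Sg * S) * Sg⁻¹ := by simp only [Matrix.mul_assoc]
      _ = Sg⁻¹ * (Sᵀ * Sg) * Sg⁻¹ := by rw [hh]
      _ = Sg⁻¹ * Sᵀ * (Sg * Sg⁻¹) := by simp only [Matrix.mul_assoc]
      _ = Sg⁻¹ * Sᵀ := by rw [Matrix.mul_nonsing_inv _ hSgdet, mul_one]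
  -- the key zero lemma
  have hzero : ∀ S : Matrix (Fin r) (Fin r) ℝ,
      S + Sᵀ = 0 → Sg * S = Sᵀ * Sg → S = 0 := by
    intro S h1 h2
    rw [hSgd] at h2
    ext i j
    have h2' := congrFun (congrFun h2 i) j
    simp only [Matrix.diagonal_mul, Matrix.mul_diagonal, Matrix.transpose_apply] at h2'
    have h1' := congrFun (congrFun h1 j) i
    simp only [Matrix.add_apply, Matrix.transpose_apply, Matrix.zero_apply] at h1'
    have hkey : (Sg i i + Sg j j) * S i j = 0 := by linear_combination h2' + Sg j j * h1'
    have hne : Sg i i + Sg j j ≠ 0 := ne_of_gt (by linarith [hpos i, hpos j])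
    simpa using (mul_eq_zero.mp hkey).resolve_left hne
  -- linear maps
  let g : Matrix (Fin r) (Fin r) ℝ →ₗ[ℝ] Matrix (Fin p) (Fin r) ℝ :=
    { toFun := fun S => U * S * Q
      map_add' := fun S T => by
        show U * (S + T) * Q = U * S * Q + U * T * Q
        rw [Matrix.mul_add, Matrix.add_mul]
      map_smul' := fun c S => by
        show U * (c • S) * Q = c • (U * S * Q)
        rw [Matrix.mul_smul, Matrix.smul_mul] }
  let h : (Matrix (Fin r) (Fin r) ℝ × Matrix (Fin (p - r)) (Fin r) ℝ) →ₗ[ℝ]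
      Matrix (Fin p) (Fin r) ℝ :=
    { toFun := fun x => (U * x.1 + Uperp * x.2) * Q
      map_add' := fun x y => by
        simp only [Prod.fst_add, Prod.snd_add]
        rw [Matrix.mul_add, Matrix.mul_add, ← Matrix.add_mul]
        congr 1
        abel
      map_smul' := fun c x => by
        simp only [Prod.smul_fst, Prod.smul_snd, RingHom.id_apply]
        rw [Matrix.mul_smul, Matrix.mul_smul, ← smul_add, Matrix.smul_mul] }
  have hg : ∀ S, g S = U * S * Q := fun _ => rfl
  have hh : ∀ x : Matrix (Fin r) (Fin r) ℝ × Matrix (Fin (p - r)) (Fin r) ℝ,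
      h x = (U * x.1 + Uperp * x.2) * Q := fun _ => rfl
  -- extraction identities
  have ext1 : ∀ S : Matrix (Fin r) (Fin r) ℝ, Uᵀ * (U * S * Q) * Pᵀ = S := by
    intro S
    calc Uᵀ * (U * S * Q) * Pᵀ = (Uᵀ * U) * S * (Q * Pᵀ) := by simp only [Matrix.mul_assoc]
    _ = S := by rw [hU, hQP, one_mul, mul_one]
  have ext4 : ∀ S : Matrix (Fin r) (Fin r) ℝ, Uperpᵀ * (U * S * Q) * Pᵀ = 0 := by
    intro S
    calc Uperpᵀ * (U * S * Q) * Pᵀ = (Uperpᵀ * U) * S * (Q * Pᵀ) := by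
          simp only [Matrix.mul_assoc]
    _ = 0 := by rw [hUpU, Matrix.zero_mul, Matrix.zero_mul]
  have extAdd : ∀ (S : Matrix (Fin r) (Fin r) ℝ) (D : Matrix (Fin (p - r)) (Fin r) ℝ),
      Uᵀ * (U * S + Uperp * D) = S := by
    intro S D
    rw [Matrix.mul_add, ← Matrix.mul_assoc, ← Matrix.mul_assoc, hU, hUUp, one_mul,
      Matrix.zero_mul, add_zero]
  have extAdd' : ∀ (S : Matrix (Fin r) (Fin r) ℝ) (D : Matrix (Fin (p - r)) (Fin r) ℝ),
      Uperpᵀ * (U * S + Uperp * D) = D := by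
    intro S D
    rw [Matrix.mul_add, ← Matrix.mul_assoc, ← Matrix.mul_assoc, hUpU, hUperp, Matrix.zero_mul, Matrix.one_mul, zero_add]
  have ext2 : ∀ (S : Matrix (Fin r) (Fin r) ℝ) (D : Matrix (Fin (p - r)) (Fin r) ℝ),
      Uᵀ * ((U * S + Uperp * D) * Q) * Pᵀ = S := by
    intro S D
    calc Uᵀ * ((U * S + Uperp * D) * Q) * Pᵀ
        = (Uᵀ * (U * S + Uperp * D)) * (Q * Pᵀ) := by simp only [Matrix.mul_assoc]
    _ = S := by rw [extAdd, hQP, mul_one]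
  have ext3 : ∀ (S : Matrix (Fin r) (Fin r) ℝ) (D : Matrix (Fin (p - r)) (Fin r) ℝ),
      Uperpᵀ * ((U * S + Uperp * D) * Q) * Pᵀ = D := by
    intro S D
    calc Uperpᵀ * ((U * S + Uperp * D) * Q) * Pᵀ
        = (Uperpᵀ * (U * S + Uperp * D)) * (Q * Pᵀ) := by simp only [Matrix.mul_assoc]
    _ = D := by rw [extAdd', hQP, Matrix.mul_one]
  have hginj : Function.Injective g := by
    intro S T hST
    have := congrArg (fun X => Uᵀ * X * Pᵀ) hST
    simpa only [hg, ext1] using this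
  have hhinj : Function.Injective h := by
    rintro ⟨S, D⟩ ⟨S', D'⟩ hST
    have h1 := congrArg (fun X => Uᵀ * X * Pᵀ) hST
    have h2 := congrArg (fun X => Uperpᵀ * X * Pᵀ) hST
    simp only [hh, ext2, ext3] at h1 h2
    exact Prod.ext h1 h2
  let W : Submodule ℝ (Matrix (Fin r) (Fin r) ℝ × Matrix (Fin (p - r)) (Fin r) ℝ) :=
    { carrier := {x | x.1 * Sg⁻¹ = Sg⁻¹ * x.1ᵀ}
      add_mem' := by
        intro a b ha hb
        simp only [Set.mem_setOf_eq, Prod.fst_add] at *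
        rw [Matrix.add_mul, ha, hb, Matrix.transpose_add, Matrix.mul_add]
      zero_mem' := by simp
      smul_mem' := by
        intro c a ha
        simp only [Set.mem_setOf_eq, Prod.smul_fst] at *
        rw [Matrix.smul_mul, ha, Matrix.transpose_smul, Matrix.mul_smul] }
  have memW : ∀ x : Matrix (Fin r) (Fin r) ℝ × Matrix (Fin (p - r)) (Fin r) ℝ,
      x ∈ W ↔ x.1 * Sg⁻¹ = Sg⁻¹ * x.1ᵀ := fun _ => Iff.rfl
  set V₁ := (skewK r).map g with hV₁def
  set V₂ := W.map h with hV₂def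
  set set1 := {A : Matrix (Fin p) (Fin r) ℝ | ∃ S : Matrix (Fin r) (Fin r) ℝ,
          S + Sᵀ = 0 ∧ A = U * S * Q} with hset1def
  set set2 := {A : Matrix (Fin p) (Fin r) ℝ | ∃ S : Matrix (Fin r) (Fin r) ℝ,
          ∃ D : Matrix (Fin (p - r)) (Fin r) ℝ,
          S * Sg⁻¹ = Sg⁻¹ * Sᵀ ∧ A = (U * S + Uperp * D) * Q} with hset2def
  have hmem1 : ∀ A, A ∈ set1 ↔ A ∈ V₁ := by
    intro A
    constructor
    · rintro ⟨S, hS, rfl⟩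
      exact Submodule.mem_map.mpr ⟨S, hS, rfl⟩
    · rintro hA
      obtain ⟨S, hS, rfl⟩ := Submodule.mem_map.mp hA
      exact ⟨S, hS, rfl⟩
  have hmem2 : ∀ A, A ∈ set2 ↔ A ∈ V₂ := by
    intro A
    constructor
    · rintro ⟨S, D, hS, rfl⟩
      exact Submodule.mem_map.mpr ⟨(S, D), hS, rfl⟩
    · rintro hA
      obtain ⟨⟨S, D⟩, hS, rfl⟩ := Submodule.mem_map.mp hA
      exact ⟨S, D, hS, rfl⟩
  have hspan1 : Submodule.span ℝ set1 = V₁ := by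
    apply le_antisymm
    · rw [Submodule.span_le]
      intro A hA
      exact (hmem1 A).mp hA
    · intro A hA
      exact Submodule.subset_span ((hmem1 A).mpr hA)
  have hspan2 : Submodule.span ℝ set2 = V₂ := by
    apply le_antisymm
    · rw [Submodule.span_le]
      intro A hA
      exact (hmem2 A).mp hA
    · intro A hA
      exact Submodule.subset_span ((hmem2 A).mpr hA)
  -- existence of the decomposition
  have hexist : ∀ M : Matrix (Fin p) (Fin r) ℝ,
      ∃ (S₁ S₂ : Matrix (Fin r) (Fin r) ℝ) (D : Matrix (Fin (p - r)) (Fin r) ℝ),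
        S₁ + S₁ᵀ = 0 ∧ S₂ * Sg⁻¹ = Sg⁻¹ * S₂ᵀ ∧
        M = U * S₁ * Q + (U * S₂ + Uperp * D) * Q := by
    intro M
    set T := Uᵀ * M * Pᵀ with hTdef
    set D := Uperpᵀ * M * Pᵀ with hDdef
    set S₁ : Matrix (Fin r) (Fin r) ℝ := Matrix.of (fun i j =>
      (Sg i i * T i j - Sg j j * T j i) / (Sg i i + Sg j j)) with hS₁def
    set S₂ := T - S₁ with hS₂def
    have hne : ∀ i j : Fin r, Sg i i + Sg j j ≠ 0 := fun i j =>
      ne_of_gt (by linarith [hpos i, hpos j])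
    have c1 : S₁ + S₁ᵀ = 0 := by
      ext i j
      simp only [hS₁def, Matrix.add_apply, Matrix.transpose_apply, Matrix.of_apply,
        Matrix.zero_apply]
      rw [add_comm (Sg j j) (Sg i i), ← add_div]
      have : Sg i i * T i j - Sg j j * T j i + (Sg j j * T j i - Sg i i * T i j) = 0 := by ring
      rw [this, zero_div]
    have c2 : Sg * S₂ = S₂ᵀ * Sg := by
      rw [hSgd]
      ext i j
      simp only [Matrix.diagonal_mul, Matrix.mul_diagonal, Matrix.transpose_apply,
        hS₂def, Matrix.sub_apply, hS₁def, Matrix.of_apply]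
      field_simp [hne i j, hne j i]
      ring
    have c2' : S₂ * Sg⁻¹ = Sg⁻¹ * S₂ᵀ := (hconv S₂).mpr c2
    refine ⟨S₁, S₂, D, c1, c2', ?_⟩
    have hsum : U * S₁ * Q + (U * S₂ + Uperp * D) * Q = (U * T + Uperp * D) * Q := by
      rw [← Matrix.add_mul]
      congr 1
      rw [Matrix.mul_sub]
      abel
    rw [hsum]
    have hcombine : U * T + Uperp * D = M * Pᵀ := by
      calc U * (Uᵀ * M * Pᵀ) + Uperp * (Uperpᵀ * M * Pᵀ)
          = (U * Uᵀ) * (M * Pᵀ) + (Uperp * Uperpᵀ) * (M * Pᵀ) := by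
            simp only [Matrix.mul_assoc]
      _ = (U * Uᵀ + Uperp * Uperpᵀ) * (M * Pᵀ) := by rw [Matrix.add_mul]
      _ = M * Pᵀ := by rw [hcomp, Matrix.one_mul]
    rw [hcombine, Matrix.mul_assoc, hPQ, Matrix.mul_one]
  have hsup : V₁ ⊔ V₂ = ⊤ := by
    rw [eq_top_iff]
    rintro M -
    obtain ⟨S₁, S₂, D, c1, c2, c3⟩ := hexist M
    rw [c3]
    exact Submodule.add_mem_sup (Submodule.mem_map.mpr ⟨S₁, c1, rfl⟩)
      (Submodule.mem_map.mpr ⟨(S₂, D), c2, rfl⟩)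
  have hinf : V₁ ⊓ V₂ = ⊥ := by
    rw [eq_bot_iff]
    rintro x ⟨hx1, hx2⟩
    obtain ⟨S, hS, rfl⟩ := Submodule.mem_map.mp hx1
    obtain ⟨⟨S', D'⟩, hS', heq⟩ := Submodule.mem_map.mp hx2
    have e1 := congrArg (fun X => Uᵀ * X * Pᵀ) heq
    simp only [hg, hh, ext1, ext2] at e1
    have hSz : S = 0 := hzero S hS ((hconv S).mp (by rw [← e1]; exact hS'))
    rw [hSz, map_zero]
    exact Submodule.zero_mem ⊥
  have hfin1 : Module.finrank ℝ V₁ = (r ^ 2 - r) / 2 := by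
    rw [hV₁def, ← (Submodule.equivMapOfInjective g hginj (skewK r)).finrank_eq, finrank_skewK]
  refine ⟨?_, ?_, ?_, ?_⟩
  · -- orthogonality
    rintro A ⟨S₁, hS₁, rfl⟩ B ⟨S₂, D, hS₂, rfl⟩
    have hS1T : S₁ᵀ = -S₁ := eq_neg_of_add_eq_zero_left (by rwa [add_comm] at hS₁)
    have h1 : (U * S₁ * Q)ᵀ * ((U * S₂ + Uperp * D) * Q) = Qᵀ * (S₁ᵀ * (S₂ * Q)) := by
      rw [Matrix.transpose_mul, Matrix.transpose_mul]
      calc Qᵀ * (S₁ᵀ * Uᵀ) * ((U * S₂ + Uperp * D) * Q)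
          = Qᵀ * (S₁ᵀ * ((Uᵀ * (U * S₂ + Uperp * D)) * Q)) := by simp only [Matrix.mul_assoc]
      _ = Qᵀ * (S₁ᵀ * (S₂ * Q)) := by rw [extAdd]
    rw [h1]
    have h2 : (Qᵀ * (S₁ᵀ * (S₂ * Q))).trace = (S₁ᵀ * (S₂ * Sg⁻¹)).trace := by
      rw [Matrix.trace_mul_comm]
      congr 1
      calc S₁ᵀ * (S₂ * Q) * Qᵀ = S₁ᵀ * (S₂ * (Q * Qᵀ)) := by simp only [Matrix.mul_assoc]
      _ = S₁ᵀ * (S₂ * Sg⁻¹) := by rw [hQQT]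
    rw [h2]
    have hSgi : Sg⁻¹ᵀ = Sg⁻¹ := by rw [Matrix.transpose_nonsing_inv, hSgT]
    have e1 : (S₁ᵀ * (S₂ * Sg⁻¹)).trace = -(S₁ * (Sg⁻¹ * S₂ᵀ)).trace := by
      rw [hS₂, hS1T, Matrix.neg_mul, Matrix.trace_neg]
    have e2 : (S₁ᵀ * (S₂ * Sg⁻¹)).trace = (S₁ * (Sg⁻¹ * S₂ᵀ)).trace := by
      have htr : (S₁ᵀ * (S₂ * Sg⁻¹))ᵀ = (Sg⁻¹ * S₂ᵀ) * S₁ := by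
        rw [Matrix.transpose_mul, Matrix.transpose_mul, Matrix.transpose_transpose, hSgi]
      calc (S₁ᵀ * (S₂ * Sg⁻¹)).trace = ((S₁ᵀ * (S₂ * Sg⁻¹))ᵀ).trace :=
            (Matrix.trace_transpose _).symm
      _ = ((Sg⁻¹ * S₂ᵀ) * S₁).trace := by rw [htr]
      _ = (S₁ * (Sg⁻¹ * S₂ᵀ)).trace := Matrix.trace_mul_comm _ _
    linarith [e1, e2]
  · rw [hspan1, hfin1]
  · rw [hspan2]
    have hdim := Submodule.finrank_sup_add_finrank_inf_eq V₁ V₂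
    rw [hsup, hinf, finrank_top, finrank_bot, add_zero] at hdim
    have hmat : Module.finrank ℝ (Matrix (Fin p) (Fin r) ℝ) = p * r := by
      rw [Module.finrank_matrix]; simp
    rw [hmat, hfin1] at hdim
    omega
  · intro M
    obtain ⟨S₁, S₂, D, c1, c2, c3⟩ := hexist M
    refine ⟨(U * S₁ * Q, (U * S₂ + Uperp * D) * Q), ⟨⟨S₁, c1, rfl⟩, ⟨S₂, D, c2, rfl⟩, c3⟩, ?_⟩
    rintro ⟨A, B⟩ ⟨⟨Sa, hSa, hA⟩, ⟨Sb, Db, hSb, hB⟩, hM⟩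
    dsimp only at hA hB hM
    have hx : A - U * S₁ * Q = (U * S₂ + Uperp * D) * Q - B := by
      calc A - U * S₁ * Q = (A + B) - B - U * S₁ * Q := by abel
      _ = (U * S₁ * Q + (U * S₂ + Uperp * D) * Q) - B - U * S₁ * Q := by rw [← hM, ← c3]
      _ = (U * S₂ + Uperp * D) * Q - B := by abel
    have hxg : A - U * S₁ * Q = U * (Sa - S₁) * Q := by
      rw [hA, ← Matrix.sub_mul, ← Matrix.mul_sub]
    have hxh : (U * S₂ + Uperp * D) * Q - B = (U * (S₂ - Sb) + Uperp * (D - Db)) * Q := by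
      rw [hB, ← Matrix.sub_mul]
      congr 1
      rw [Matrix.mul_sub, Matrix.mul_sub]
      abel
    have heq2 : U * (Sa - S₁) * Q = (U * (S₂ - Sb) + Uperp * (D - Db)) * Q := by
      rw [← hxg, hx, hxh]
    have e1 := congrArg (fun X => Uᵀ * X * Pᵀ) heq2
    have e2 := congrArg (fun X => Uperpᵀ * X * Pᵀ) heq2
    simp only [ext1, ext2, ext3, ext4] at e1 e2
    have hskewd : (Sa - S₁) + (Sa - S₁)ᵀ = 0 := by
      rw [Matrix.transpose_sub]
      calc Sa - S₁ + (Saᵀ - S₁ᵀ) = (Sa + Saᵀ) - (S₁ + S₁ᵀ) := by abel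
      _ = 0 := by rw [hSa, c1, sub_zero]
    have hcondd : (Sa - S₁) * Sg⁻¹ = Sg⁻¹ * (Sa - S₁)ᵀ := by
      rw [e1, Matrix.sub_mul, c2, hSb, Matrix.transpose_sub, Matrix.mul_sub]
    have hS0 : Sa - S₁ = 0 := hzero _ hskewd ((hconv _).mp hcondd)
    have hA' : A = U * S₁ * Q := by
      have h0 : A - U * S₁ * Q = 0 := by
        rw [hxg, hS0, Matrix.mul_zero, Matrix.zero_mul]
      exact sub_eq_zero.mp h0
    have hB' : B = (U * S₂ + Uperp * D) * Q := by
      have hs2 : S₂ - Sb = 0 := by rw [← e1, hS0]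
      have hd2 : D - Db = 0 := e2.symm
      have h0 : (U * S₂ + Uperp * D) * Q - B = 0 := by
        rw [hxh, hs2, hd2, Matrix.mul_zero, Matrix.mul_zero, add_zero, Matrix.zero_mul]
      exact (sub_eq_zero.mp h0).symm
    exact Prod.ext hA' hB'
end

section
/- Let Y ∈ ℝ^{p×r} have rank r, X = YYᵀ = UΣUᵀ, P = UᵀY (so PPᵀ = Σ). For A = (US + U⊥D)P^{-ᵀ} with SΣ^{-1} symmetric (i.e., A in the subspace 𝒜_n̄ull), define L_Y(A) = YAᵀ + AYᵀ. Then 2σ_r(X)·‖A‖_F² ≤ ‖L_Y(A)‖_F² ≤ 4σ_1(X)·‖A‖_F², where σ_1(X) and σ_r(X) are the largest and r-th largest singular values (eigenvalues) of X. -/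
open Matrix

open Polynomial

/-- Squared Frobenius norm of a real matrix. -/
def frobSq {m n : ℕ} (M : Matrix (Fin m) (Fin n) ℝ) : ℝ :=
  ∑ i, ∑ j, (M i j) ^ 2


lemma charpoly_conj' {n : Type*} [Fintype n] [DecidableEq n]
    (Q M : Matrix n n ℝ) (h1 : Q * Qᵀ = 1) :
    (Q * M * Qᵀ).charpoly = M.charpoly := by
  have hmap : (Q * Qᵀ).map (C : ℝ →+* ℝ[X]) = 1 := by rw [h1]; simp
  have key : charmatrix (Q * M * Qᵀ) =
      Q.map (C : ℝ →+* ℝ[X]) * charmatrix M * Qᵀ.map (C : ℝ →+* ℝ[X]) := by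
    rw [charmatrix, charmatrix, Matrix.mul_sub, Matrix.sub_mul]
    congr 1
    · rw [scalar_apply, ← Matrix.smul_one_eq_diagonal, mul_smul_comm,
        smul_mul_assoc, Matrix.mul_one, ← Matrix.map_mul, hmap]
    · simp only [RingHom.mapMatrix_apply, Matrix.map_mul]
  rw [Matrix.charpoly, Matrix.charpoly, key, det_mul, det_mul]
  rw [mul_comm (Q.map C).det _, mul_assoc, ← det_mul, ← Matrix.map_mul, hmap]
  simp

lemma charpoly_diag {n : ℕ} (d : Fin n → ℝ) :
    (diagonal d).charpoly = ∏ i, (X - C (d i)) := by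
  rw [Matrix.charpoly_of_upperTriangular _ (Matrix.blockTriangular_diagonal d)]
  simp

lemma multiset_of_prod_eq {n : ℕ} (v w : Fin n → ℝ)
    (h : ∏ i, (X - C (v i)) = ∏ i, (X - C (w i))) :
    Multiset.map v Finset.univ.val = Multiset.map w Finset.univ.val := by
  have h1 : ∀ u : Fin n → ℝ, (∏ i, (X - C (u i))) =
      ((Multiset.map u Finset.univ.val).map (fun a => X - C a)).prod := by
    intro u
    rw [Finset.prod_eq_multiset_prod, Multiset.map_map]
    rfl
  have := congrArg Polynomial.roots (by rw [← h1, ← h1]; exact h :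
    ((Multiset.map v Finset.univ.val).map (fun a => X - C a)).prod =
    ((Multiset.map w Finset.univ.val).map (fun a => X - C a)).prod)
  rwa [Polynomial.roots_multiset_prod_X_sub_C, Polynomial.roots_multiset_prod_X_sub_C] at this

lemma map_sort_eq {n : ℕ} (f : Fin n → ℝ) :
    Multiset.map (f ∘ Tuple.sort f) Finset.univ.val = Multiset.map f Finset.univ.val := by
  rw [← Multiset.map_map]
  congr 1
  have : Multiset.map (⇑(Tuple.sort f)) Finset.univ.val
      = (Finset.univ.map (Tuple.sort f).toEmbedding).val := by
    simp [Finset.map_val]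
  rw [this, Finset.map_univ_equiv]

lemma filter_card_eq {n m : ℕ} (f : Fin n → ℝ) (g : Fin m → ℝ) (c : ℝ)
    (h : Multiset.map f Finset.univ.val = Multiset.map g Finset.univ.val) :
    (Finset.univ.filter (fun j => c < f j)).card
      = (Finset.univ.filter (fun j => c < g j)).card := by
  classical
  have h2 := congrArg (fun s => Multiset.card (Multiset.filter (fun x => c < x) s)) h
  simp only [Multiset.filter_map, Multiset.card_map] at h2
  rw [Finset.card_def, Finset.card_def, Finset.filter_val, Finset.filter_val]
  convert h2 using 2 <;> exact Multiset.filter_congr (fun _ _ => Iff.rfl)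


lemma mono_le_of_count {n : ℕ} (g : Fin n → ℝ) (hg : Monotone g) (c : ℝ) (k : ℕ) (hk : k < n)
    (hcard : (Finset.univ.filter (fun j : Fin n => c < g j)).card ≤ n - 1 - k) :
    g ⟨k, hk⟩ ≤ c := by
  by_contra hgt
  push_neg at hgt
  have hsub : (Finset.univ.filter (fun j : Fin n => k ≤ (j : ℕ))) ⊆
      (Finset.univ.filter (fun j : Fin n => c < g j)) := by
    intro j hj
    simp only [Finset.mem_filter, Finset.mem_univ, true_and] at hj ⊢
    exact lt_of_lt_of_le hgt (hg (by exact hj : (⟨k, hk⟩ : Fin n) ≤ j))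
  have hcard2 : n - k ≤ (Finset.univ.filter (fun j : Fin n => k ≤ (j : ℕ))).card := by
    have := Finset.card_le_card_of_injOn (s := (Finset.univ : Finset (Fin (n - k))))
      (t := Finset.univ.filter (fun j : Fin n => k ≤ (j : ℕ)))
      (f := fun i : Fin (n - k) => (⟨k + i, by omega⟩ : Fin n))
      (by intro i _
          refine Finset.mem_filter.mpr ⟨Finset.mem_univ _, ?_⟩
          show k ≤ k + (i : ℕ)
          exact Nat.le_add_right _ _)
      (by intro a _ b _ hab
          have : k + (a : ℕ) = k + b := congrArg (fun x : Fin n => (x : ℕ)) hab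
          exact Fin.ext (by omega))
    simpa using this
  have := (hcard2.trans (Finset.card_le_card hsub)).trans hcard
  omega

lemma mono_ge_max {n : ℕ} (g : Fin n → ℝ) (hg : Monotone g) (hn : 0 < n) (x : ℝ)
    (hx : ∃ j, g j = x) : x ≤ g ⟨n - 1, by omega⟩ := by
  obtain ⟨j, rfl⟩ := hx
  exact hg (Fin.le_def.mpr (by simp only [Fin.val_mk]; omega))

open Matrix Polynomial

lemma eig_multiset {n : ℕ} (B : Matrix (Fin n) (Fin n) ℝ) (hB : B.IsHermitian)
    (Q : Matrix (Fin n) (Fin n) ℝ) (d : Fin n → ℝ) (hQ : Q * Qᵀ = 1)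
    (hBQ : B = Q * diagonal d * Qᵀ) :
    Multiset.map hB.eigenvalues Finset.univ.val = Multiset.map d Finset.univ.val := by
  obtain ⟨V, hV, hBV⟩ : ∃ V : Matrix (Fin n) (Fin n) ℝ,
      V * Vᵀ = 1 ∧ B = V * diagonal hB.eigenvalues * Vᵀ := by
    refine ⟨(hB.eigenvectorUnitary : Matrix (Fin n) (Fin n) ℝ), ?_, ?_⟩
    · have := (Matrix.mem_unitaryGroup_iff).mp hB.eigenvectorUnitary.2
      simpa [Matrix.star_eq_conjTranspose, Matrix.conjTranspose_eq_transpose_of_trivial] using this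
    · have := hB.spectral_theorem
      simpa [Matrix.star_eq_conjTranspose, Matrix.conjTranspose_eq_transpose_of_trivial] using this
  apply multiset_of_prod_eq
  rw [← charpoly_diag, ← charpoly_diag, ← charpoly_conj' V _ hV, ← hBV,
    hBQ, charpoly_conj' Q _ hQ]

lemma sorted_eig_bounds {p r : ℕ} (hr : 0 < r) (hrp : r ≤ p)
    (B Q : Matrix (Fin p) (Fin p) ℝ) (hB : B.IsHermitian)
    (σ : Fin r → ℝ) (hσ : ∀ i, 0 < σ i)
    (e : (Fin r ⊕ Fin (p - r)) ≃ Fin p)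
    (hQ : Q * Qᵀ = 1)
    (hBQ : B = Q * diagonal (Sum.elim (fun i => σ i ^ 2) (fun _ => (0:ℝ)) ∘ e.symm) * Qᵀ)
    (i0 i1 : Fin r) (h0 : ∀ i, σ i0 ≤ σ i) (h1 : ∀ i, σ i ≤ σ i1) :
    (hB.eigenvalues ∘ Tuple.sort hB.eigenvalues) ⟨p - r, by omega⟩ ≤ σ i0 ^ 2 ∧
      σ i1 ^ 2 ≤ (hB.eigenvalues ∘ Tuple.sort hB.eigenvalues) ⟨p - 1, by omega⟩ := by
  classical
  set d : Fin p → ℝ := Sum.elim (fun i => σ i ^ 2) (fun _ => (0:ℝ)) ∘ e.symm with hd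
  have E1 : Multiset.map hB.eigenvalues Finset.univ.val = Multiset.map d Finset.univ.val :=
    eig_multiset B hB Q d hQ hBQ
  have E2 : Multiset.map (hB.eigenvalues ∘ Tuple.sort hB.eigenvalues) Finset.univ.val
      = Multiset.map d Finset.univ.val := (map_sort_eq hB.eigenvalues).trans E1
  have hmono := Tuple.monotone_sort hB.eigenvalues
  constructor
  · apply mono_le_of_count _ hmono _ _ (by omega)
    have hcc := filter_card_eq _ _ (σ i0 ^ 2) E2
    rw [hcc]
    have hbound : (Finset.univ.filter (fun j : Fin p => σ i0 ^ 2 < d j)).card ≤ r - 1 := by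
      have h1c : (Finset.univ.filter (fun j : Fin p => σ i0 ^ 2 < d j)).card
          = (Finset.univ.filter
            (fun s : Fin r ⊕ Fin (p - r) => σ i0 ^ 2 < Sum.elim (fun i => σ i ^ 2)
              (fun _ => (0:ℝ)) s)).card := by
        apply Finset.card_bij (fun s _ => e.symm s)
        · intro a ha
          simp only [Finset.mem_filter, Finset.mem_univ, true_and, hd,
            Function.comp_apply] at ha ⊢
          exact ha
        · intro a _ b _ hab; exact e.symm.injective hab
        · intro b hb
          refine ⟨e b, ?_, by simp⟩
          simp only [Finset.mem_filter, Finset.mem_univ, true_and, hd, Function.comp_apply,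
            Equiv.symm_apply_apply] at hb ⊢
          exact hb
      rw [h1c]
      have h2 : (Finset.univ.filter
          (fun s : Fin r ⊕ Fin (p - r) => σ i0 ^ 2 < Sum.elim (fun i => σ i ^ 2)
            (fun _ => (0:ℝ)) s))
          ⊆ (Finset.univ.erase i0).image Sum.inl := by
        intro s hs
        simp only [Finset.mem_filter, Finset.mem_univ, true_and] at hs
        rcases s with i | j
        · simp only [Sum.elim_inl] at hs
          refine Finset.mem_image.mpr ⟨i, Finset.mem_erase.mpr ⟨?_, Finset.mem_univ _⟩, rfl⟩
          rintro rfl; exact lt_irrefl _ hs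
        · simp only [Sum.elim_inr] at hs
          exact absurd hs (by nlinarith [hσ i0])
      calc _ ≤ ((Finset.univ.erase i0).image Sum.inl).card := Finset.card_le_card h2
        _ ≤ (Finset.univ.erase i0).card := Finset.card_image_le
        _ ≤ r - 1 := by rw [Finset.card_erase_of_mem (Finset.mem_univ _)]; simp
    omega
  · apply mono_ge_max _ hmono (by omega)
    have : σ i1 ^ 2 ∈ Multiset.map (hB.eigenvalues ∘ Tuple.sort hB.eigenvalues)
        Finset.univ.val := by
      rw [E2]
      refine Multiset.mem_map.mpr ⟨e (Sum.inl i1), Finset.mem_univ_val _, ?_⟩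
      simp [hd]
    obtain ⟨j, _, hj⟩ := Multiset.mem_map.mp this
    exact ⟨j, hj⟩

lemma term_lower (c0 u v x b : ℝ) (hu : 0 < u) (hv : 0 < v) (hc : 0 < c0)
    (hcu : c0 ≤ u) (hb : b * v = u * x) : 2 * c0 * (x ^ 2 * v⁻¹) ≤ (x + b) ^ 2 := by
  have h2 : ((x + b) * v) ^ 2 = (x * v + u * x) ^ 2 := by rw [add_mul, hb]
  rw [← div_eq_mul_inv, ← mul_div_assoc, div_le_iff₀ hv]
  nlinarith [sq_nonneg (x * u - x * v), mul_pos hv hv,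
    mul_nonneg (mul_nonneg (sq_nonneg x) hv.le) (show (0:ℝ) ≤ 2 * u - c0 by linarith)]

lemma term_upper (c1 u v x b : ℝ) (hu : 0 < u) (hv : 0 < v)
    (hvc : v ≤ c1) (huc : u ≤ c1) (hb : b * v = u * x) :
    (x + b) ^ 2 ≤ 2 * c1 * (x ^ 2 * v⁻¹) + 2 * c1 * (b ^ 2 * u⁻¹) := by
  have hc1 : 0 < c1 := lt_of_lt_of_le hv hvc
  have key : (x + b) ^ 2 * (v * u) ≤ 2 * c1 * u * x ^ 2 + 2 * c1 * v * b ^ 2 := by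
    nlinarith [sq_nonneg (u * x - v * b),
      mul_nonneg (mul_nonneg (sub_nonneg.2 huc) hu.le) (sq_nonneg x),
      mul_nonneg (mul_nonneg (sub_nonneg.2 hvc) hv.le) (sq_nonneg b),
      mul_nonneg (mul_nonneg (sub_nonneg.2 hvc) hu.le) (sq_nonneg x),
      mul_nonneg (mul_nonneg (sub_nonneg.2 huc) hv.le) (sq_nonneg b)]
  have hvu : 0 < v * u := mul_pos hv hu
  calc (x + b) ^ 2 = (x + b) ^ 2 * (v * u) / (v * u) := by field_simp
    _ ≤ (2 * c1 * u * x ^ 2 + 2 * c1 * v * b ^ 2) / (v * u) := by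
        gcongr
    _ = 2 * c1 * (x ^ 2 * v⁻¹) + 2 * c1 * (b ^ 2 * u⁻¹) := by field_simp

lemma term_lower_D (c0 v d : ℝ) (hv : 0 < v) (hc : 0 < c0) (hcv : c0 ≤ v) :
    2 * c0 * (d ^ 2 * v⁻¹) ≤ 2 * d ^ 2 := by
  rw [← div_eq_mul_inv, ← mul_div_assoc, div_le_iff₀ hv]
  nlinarith [sq_nonneg d, mul_nonneg (sq_nonneg d) (sub_nonneg.2 hcv)]

lemma term_upper_D (c1 v d : ℝ) (hv : 0 < v) (hvc : v ≤ c1) :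
    2 * d ^ 2 ≤ 4 * c1 * (d ^ 2 * v⁻¹) := by
  rw [← div_eq_mul_inv, ← mul_div_assoc, le_div_iff₀ hv]
  nlinarith [sq_nonneg d, mul_nonneg (sq_nonneg d) (sub_nonneg.2 hvc)]

lemma frobSq_eq_trace {m n : ℕ} (M : Matrix (Fin m) (Fin n) ℝ) :
    frobSq M = (Mᵀ * M).trace := by
  rw [frobSq, Matrix.trace]
  rw [Finset.sum_comm]
  apply Finset.sum_congr rfl
  intro j _
  simp [Matrix.diag, Matrix.mul_apply, sq]

lemma trace_fromBlocks' {a b : Type*} [Fintype a] [Fintype b] [DecidableEq a] [DecidableEq b]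
    (A : Matrix a a ℝ) (B : Matrix a b ℝ) (C : Matrix b a ℝ) (D : Matrix b b ℝ) :
    (Matrix.fromBlocks A B C D).trace = A.trace + D.trace := by
  simp [Matrix.trace, Fintype.sum_sum_type, Matrix.fromBlocks, Matrix.diag]
theorem stmt13 {p r : ℕ} (hr : 0 < r) (hrp : r ≤ p)
    (Y : Matrix (Fin p) (Fin r) ℝ) (hY : Y.rank = r)
    (U : Matrix (Fin p) (Fin r) ℝ) (Uperp : Matrix (Fin p) (Fin (p - r)) ℝ)
    (Sg : Matrix (Fin r) (Fin r) ℝ)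
    (hU : Uᵀ * U = 1) (hUperp : Uperpᵀ * Uperp = 1) (hUUp : Uᵀ * Uperp = 0)
    (hcomp : U * Uᵀ + Uperp * Uperpᵀ = 1)
    (hdiag : ∀ i j, i ≠ j → Sg i j = 0) (hpos : ∀ i, 0 < Sg i i)
    (hX : Y * Yᵀ = U * Sg * Uᵀ) (hP : IsUnit (Uᵀ * Y).det)
    (S : Matrix (Fin r) (Fin r) ℝ) (D : Matrix (Fin (p - r)) (Fin r) ℝ)
    (hScomm : S * Sg⁻¹ = Sg⁻¹ * Sᵀ)
    (A : Matrix (Fin p) (Fin r) ℝ)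
    (hA : A = (U * S + Uperp * D) * ((Uᵀ * Y)⁻¹)ᵀ) :
    2 * singval (Y * Yᵀ) ⟨r - 1, by omega⟩ * frobSq A ≤ frobSq (Y * Aᵀ + A * Yᵀ) ∧
      frobSq (Y * Aᵀ + A * Yᵀ) ≤ 4 * singval (Y * Yᵀ) ⟨0, by omega⟩ * frobSq A := by
  classical
  set σ : Fin r → ℝ := fun i => Sg i i with hσdef
  have hSgd : Sg = diagonal σ := by
    ext i j
    by_cases h : i = j
    · subst h; simp [Matrix.diagonal_apply_eq, hσdef]
    · simp [Matrix.diagonal_apply_ne _ h, hdiag i j h]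
  have hUpU : Uperpᵀ * U = 0 := by
    have := congrArg Matrix.transpose hUUp
    simpa using this
  have hUpY : Uperpᵀ * Y = 0 := by
    have key : (Uperpᵀ * Y) * (Uperpᵀ * Y)ᴴ = 0 := by
      rw [Matrix.conjTranspose_eq_transpose_of_trivial, Matrix.transpose_mul,
        Matrix.transpose_transpose]
      calc Uperpᵀ * Y * (Yᵀ * Uperp) = Uperpᵀ * (Y * Yᵀ) * Uperp := by
            simp only [Matrix.mul_assoc]
        _ = Uperpᵀ * U * (Sg * (Uᵀ * Uperp)) := by
            rw [hX]; simp only [Matrix.mul_assoc]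
        _ = 0 := by rw [hUpU, hUUp]; simp
    exact Matrix.self_mul_conjTranspose_eq_zero.mp key
  set P : Matrix (Fin r) (Fin r) ℝ := Uᵀ * Y with hPdef
  have hYUP : Y = U * P := by
    have h1 : (U * Uᵀ + Uperp * Uperpᵀ) * Y = Y := by rw [hcomp, Matrix.one_mul]
    calc Y = (U * Uᵀ + Uperp * Uperpᵀ) * Y := h1.symm
      _ = U * P + Uperp * (Uperpᵀ * Y) := by
          rw [Matrix.add_mul, Matrix.mul_assoc, Matrix.mul_assoc]
      _ = U * P := by rw [hUpY]; simp
  have hPP : P * Pᵀ = Sg := by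
    rw [hPdef, Matrix.transpose_mul, Matrix.transpose_transpose]
    calc Uᵀ * Y * (Yᵀ * U) = Uᵀ * (Y * Yᵀ) * U := by
          simp only [Matrix.mul_assoc]
      _ = Uᵀ * U * (Sg * (Uᵀ * U)) := by
          rw [hX]; simp only [Matrix.mul_assoc]
      _ = Sg := by rw [hU]; simp
  have hPi1 : P * P⁻¹ = 1 := Matrix.mul_nonsing_inv _ hP
  have hSinv : (P⁻¹)ᵀ * P⁻¹ = Sg⁻¹ := by
    rw [Matrix.transpose_nonsing_inv, ← Matrix.mul_inv_rev, hPP]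
  have hSginv : Sg⁻¹ = diagonal (fun i => (σ i)⁻¹) := by
    apply Matrix.inv_eq_right_inv
    rw [hSgd, Matrix.diagonal_mul_diagonal]
    ext i j
    by_cases h : i = j
    · subst h; simp [Matrix.one_apply_eq, hσdef, mul_inv_cancel₀ (ne_of_gt (hpos i))]
    · simp [Matrix.diagonal_apply_ne _ h, Matrix.one_apply_ne h]
  -- structure of Y Aᵀ and A Yᵀ
  have hYA : Y * Aᵀ = U * (Sᵀ * Uᵀ) + U * (Dᵀ * Uperpᵀ) := by
    have ht : ((U * S + Uperp * D) * (P⁻¹)ᵀ)ᵀ = P⁻¹ * (Sᵀ * Uᵀ + Dᵀ * Uperpᵀ) := by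
      rw [Matrix.transpose_mul, Matrix.transpose_transpose, Matrix.transpose_add,
        Matrix.transpose_mul, Matrix.transpose_mul]
    rw [hA, ht, hYUP]
    calc U * P * (P⁻¹ * (Sᵀ * Uᵀ + Dᵀ * Uperpᵀ))
        = U * ((P * P⁻¹) * (Sᵀ * Uᵀ + Dᵀ * Uperpᵀ)) := by simp only [Matrix.mul_assoc]
      _ = U * (Sᵀ * Uᵀ + Dᵀ * Uperpᵀ) := by rw [hPi1, Matrix.one_mul]
      _ = U * (Sᵀ * Uᵀ) + U * (Dᵀ * Uperpᵀ) := by rw [Matrix.mul_add]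
  have hAY : A * Yᵀ = U * (S * Uᵀ) + Uperp * (D * Uᵀ) := by
    have ht : (P⁻¹)ᵀ * Pᵀ = 1 := by
      rw [← Matrix.transpose_mul, hPi1, Matrix.transpose_one]
    rw [hA, hYUP, Matrix.transpose_mul]
    calc (U * S + Uperp * D) * (P⁻¹)ᵀ * (Pᵀ * Uᵀ)
        = (U * S + Uperp * D) * (((P⁻¹)ᵀ * Pᵀ) * Uᵀ) := by simp only [Matrix.mul_assoc]
      _ = (U * S + Uperp * D) * Uᵀ := by rw [ht, Matrix.one_mul]
      _ = U * (S * Uᵀ) + Uperp * (D * Uᵀ) := by rw [Matrix.add_mul]; simp only [Matrix.mul_assoc]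
  -- block forms
  have hQQt : fromCols U Uperp * (fromCols U Uperp)ᵀ = 1 := by
    rw [transpose_fromCols, fromCols_mul_fromRows, hcomp]
  have hQtQ : (fromCols U Uperp)ᵀ * fromCols U Uperp = 1 := by
    rw [transpose_fromCols, fromRows_mul_fromCols, hU, hUperp, hUUp, hUpU,
      Matrix.fromBlocks_one]
  have hLblock : Y * Aᵀ + A * Yᵀ
      = fromCols U Uperp * fromBlocks (S + Sᵀ) Dᵀ D 0 * (fromCols U Uperp)ᵀ := by
    rw [hYA, hAY, transpose_fromCols, fromCols_mul_fromBlocks, fromCols_mul_fromRows]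
    simp only [Matrix.mul_zero, add_zero, Matrix.add_mul, Matrix.mul_add, Matrix.mul_assoc]
    abel
  have hAblock : A = fromCols U Uperp * fromRows (S * (P⁻¹)ᵀ) (D * (P⁻¹)ᵀ) := by
    rw [hA, fromCols_mul_fromRows, Matrix.add_mul]
    simp only [Matrix.mul_assoc]
  -- frobenius computations
  have frobL_eq : frobSq (Y * Aᵀ + A * Yᵀ)
      = (∑ j, ∑ i, (S i j + S j i) ^ 2) + 2 * (∑ j, ∑ k, D k j ^ 2) := by
    rw [frobSq_eq_trace, hLblock]
    set Q := fromCols U Uperp with hQdef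
    set F : Matrix (Fin r ⊕ Fin (p - r)) (Fin r ⊕ Fin (p - r)) ℝ := fromBlocks (S + Sᵀ) Dᵀ D 0
      with hFdef
    have hLt : (Q * F * Qᵀ)ᵀ * (Q * F * Qᵀ) = Q * (Fᵀ * F) * Qᵀ := by
      rw [Matrix.transpose_mul, Matrix.transpose_mul, Matrix.transpose_transpose]
      calc Q * (Fᵀ * Qᵀ) * (Q * F * Qᵀ) = Q * (Fᵀ * ((Qᵀ * Q) * (F * Qᵀ))) := by
            simp only [Matrix.mul_assoc]
        _ = Q * (Fᵀ * F) * Qᵀ := by rw [hQtQ, Matrix.one_mul]; simp only [Matrix.mul_assoc]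
    rw [hLt, Matrix.trace_mul_cycle, hQtQ, Matrix.one_mul]
    have hFF : Fᵀ * F = fromBlocks ((S + Sᵀ)ᵀ * (S + Sᵀ) + Dᵀ * D) ((S + Sᵀ)ᵀ * Dᵀ)
        (D * (S + Sᵀ)) (D * Dᵀ) := by
      rw [hFdef, Matrix.fromBlocks_transpose, Matrix.fromBlocks_multiply]
      congr 1 <;> simp [Matrix.transpose_transpose]
    rw [hFF, trace_fromBlocks', Matrix.trace_add]
    have h1 : ((S + Sᵀ)ᵀ * (S + Sᵀ)).trace = ∑ j, ∑ i, (S i j + S j i) ^ 2 := by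
      rw [← frobSq_eq_trace, frobSq, Finset.sum_comm]
      simp [Matrix.add_apply, Matrix.transpose_apply]
    have h2 : (Dᵀ * D).trace = ∑ j, ∑ k, D k j ^ 2 := by
      rw [← frobSq_eq_trace, frobSq, Finset.sum_comm]
    have h3 : (D * Dᵀ).trace = ∑ j, ∑ k, D k j ^ 2 := by
      rw [Matrix.trace_mul_comm, h2]
    rw [h1, h2, h3]; ring
  have frobA_eq : frobSq A
      = (∑ j, ∑ i, S i j ^ 2 * (σ j)⁻¹) + (∑ j, ∑ k, D k j ^ 2 * (σ j)⁻¹) := by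
    rw [frobSq_eq_trace, hAblock]
    set Q := fromCols U Uperp with hQdef
    set G := S * (P⁻¹)ᵀ with hGdef
    set H := D * (P⁻¹)ᵀ with hHdef
    have hAA : (Q * fromRows G H)ᵀ * (Q * fromRows G H) = Gᵀ * G + Hᵀ * H := by
      rw [Matrix.transpose_mul]
      calc (fromRows G H)ᵀ * Qᵀ * (Q * fromRows G H)
          = (fromRows G H)ᵀ * ((Qᵀ * Q) * fromRows G H) := by simp only [Matrix.mul_assoc]
        _ = (fromRows G H)ᵀ * fromRows G H := by rw [hQtQ, Matrix.one_mul]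
        _ = Gᵀ * G + Hᵀ * H := by
            rw [transpose_fromRows, fromCols_mul_fromRows]
    rw [hAA, Matrix.trace_add]
    have hG : (Gᵀ * G).trace = ∑ j, ∑ i, S i j ^ 2 * (σ j)⁻¹ := by
      rw [hGdef, Matrix.transpose_mul, Matrix.transpose_transpose]
      have : P⁻¹ * Sᵀ * (S * (P⁻¹)ᵀ) = P⁻¹ * ((Sᵀ * S) * (P⁻¹)ᵀ) := by
        simp only [Matrix.mul_assoc]
      rw [this, Matrix.trace_mul_comm]
      have : Sᵀ * S * (P⁻¹)ᵀ * P⁻¹ = (Sᵀ * S) * ((P⁻¹)ᵀ * P⁻¹) := by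
        simp only [Matrix.mul_assoc]
      rw [this, hSinv, hSginv, Matrix.trace]
      apply Finset.sum_congr rfl
      intro j _
      rw [Matrix.diag_apply, Matrix.mul_diagonal, Matrix.mul_apply, Finset.sum_mul]
      apply Finset.sum_congr rfl
      intro i _
      simp [sq]
    have hH : (Hᵀ * H).trace = ∑ j, ∑ k, D k j ^ 2 * (σ j)⁻¹ := by
      rw [hHdef, Matrix.transpose_mul, Matrix.transpose_transpose]
      have : P⁻¹ * Dᵀ * (D * (P⁻¹)ᵀ) = P⁻¹ * ((Dᵀ * D) * (P⁻¹)ᵀ) := by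
        simp only [Matrix.mul_assoc]
      rw [this, Matrix.trace_mul_comm]
      have : Dᵀ * D * (P⁻¹)ᵀ * P⁻¹ = (Dᵀ * D) * ((P⁻¹)ᵀ * P⁻¹) := by
        simp only [Matrix.mul_assoc]
      rw [this, hSinv, hSginv, Matrix.trace]
      apply Finset.sum_congr rfl
      intro j _
      rw [Matrix.diag_apply, Matrix.mul_diagonal, Matrix.mul_apply, Finset.sum_mul]
      apply Finset.sum_congr rfl
      intro k _
      simp [sq]
    rw [hG, hH]
  -- entrywise symmetry relation
  have hsym : ∀ i j, S j i * σ j = σ i * S i j := by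
    intro i j
    have h1 := congrArg (fun M => M i j) hScomm
    simp only [hSginv, Matrix.mul_diagonal, Matrix.diagonal_mul, Matrix.transpose_apply] at h1
    have hσj : σ j ≠ 0 := ne_of_gt (hpos j)
    have hσi : σ i ≠ 0 := ne_of_gt (hpos i)
    field_simp at h1
    linarith [h1]
  -- min and max entries
  obtain ⟨i0, -, h0⟩ := Finset.exists_min_image Finset.univ σ ⟨⟨0, hr⟩, Finset.mem_univ _⟩
  obtain ⟨i1, -, h1⟩ := Finset.exists_max_image Finset.univ σ ⟨⟨0, hr⟩, Finset.mem_univ _⟩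
  have h0' : ∀ i, σ i0 ≤ σ i := fun i => h0 i (Finset.mem_univ i)
  have h1' : ∀ i, σ i ≤ σ i1 := fun i => h1 i (Finset.mem_univ i)
  have hfrobA_nonneg : 0 ≤ frobSq A := by
    apply Finset.sum_nonneg; intro i _; apply Finset.sum_nonneg; intro j _; positivity
  -- spectral part
  have epr : r + (p - r) = p := by omega
  set e : (Fin r ⊕ Fin (p - r)) ≃ Fin p := finSumFinEquiv.trans (finCongr epr) with hedef
  set Q2 : Matrix (Fin p) (Fin p) ℝ := (fromCols U Uperp).submatrix id e.symm with hQ2def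
  have hQ2Q2 : Q2 * Q2ᵀ = 1 := by
    rw [hQ2def, Matrix.transpose_submatrix, Matrix.submatrix_mul_equiv, hQQt]
    simp
  have hB : ((Y * Yᵀ)ᵀ * (Y * Yᵀ)).IsHermitian := by
    simpa [Matrix.conjTranspose_eq_transpose_of_trivial] using
      Matrix.isHermitian_conjTranspose_mul_self (Y * Yᵀ)
  have hBdec : (Y * Yᵀ)ᵀ * (Y * Yᵀ)
      = Q2 * diagonal (Sum.elim (fun i => σ i ^ 2) (fun _ => (0:ℝ)) ∘ e.symm) * Q2ᵀ := by
    have hXsym : (Y * Yᵀ)ᵀ = Y * Yᵀ := by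
      rw [Matrix.transpose_mul, Matrix.transpose_transpose]
    have hB2 : (Y * Yᵀ)ᵀ * (Y * Yᵀ) = U * diagonal (fun i => σ i ^ 2) * Uᵀ := by
      rw [hXsym, hX]
      calc U * Sg * Uᵀ * (U * Sg * Uᵀ) = U * (Sg * ((Uᵀ * U) * (Sg * Uᵀ))) := by
            simp only [Matrix.mul_assoc]
        _ = U * ((Sg * Sg) * Uᵀ) := by rw [hU, Matrix.one_mul]; simp only [Matrix.mul_assoc]
        _ = U * diagonal (fun i => σ i ^ 2) * Uᵀ := by
            rw [hSgd, Matrix.diagonal_mul_diagonal]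
            simp only [Matrix.mul_assoc, sq]
    have hdsub : diagonal (Sum.elim (fun i => σ i ^ 2) (fun _ => (0:ℝ)) ∘ e.symm)
        = (diagonal (Sum.elim (fun i => σ i ^ 2) (fun _ => (0:ℝ)))).submatrix e.symm e.symm := by
      ext i j
      by_cases h : i = j
      · subst h; simp
      · rw [Matrix.diagonal_apply_ne _ h, Matrix.submatrix_apply,
          Matrix.diagonal_apply_ne _ (fun hc => h (e.symm.injective hc))]
    rw [hdsub, hQ2def, Matrix.transpose_submatrix, Matrix.submatrix_mul_equiv,
      Matrix.submatrix_mul_equiv]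
    have hfb : diagonal (Sum.elim (fun i => σ i ^ 2) (fun _ : Fin (p - r) => (0:ℝ)))
        = fromBlocks (diagonal fun i => σ i ^ 2) 0 0 0 := by
      have hh := Matrix.fromBlocks_diagonal (fun i => σ i ^ 2) (fun _ : Fin (p - r) => (0:ℝ))
      rw [Matrix.diagonal_zero] at hh
      exact hh.symm
    rw [hfb, hB2]
    have : Matrix.fromCols U Uperp * (Matrix.fromBlocks (diagonal fun i => σ i ^ 2) 0 0 0 :
        Matrix (Fin r ⊕ Fin (p - r)) (Fin r ⊕ Fin (p - r)) ℝ) *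
        (Matrix.fromCols U Uperp)ᵀ = U * diagonal (fun i => σ i ^ 2) * Uᵀ := by
      rw [transpose_fromCols, fromCols_mul_fromBlocks, fromCols_mul_fromRows]
      simp [Matrix.mul_assoc]
    rw [this]
    simp
  obtain ⟨hlow, hhigh⟩ := sorted_eig_bounds hr hrp _ Q2 hB σ hpos e hQ2Q2 hBdec i0 i1 h0' h1'
  have hrev1 : (⟨r - 1, by omega⟩ : Fin p).rev = ⟨p - r, by omega⟩ := by
    ext; simp [Fin.val_rev]; omega
  have hrev0 : (⟨0, by omega⟩ : Fin p).rev = ⟨p - 1, by omega⟩ := by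
    ext; simp [Fin.val_rev]
  have hsv1 : singval (Y * Yᵀ) ⟨r - 1, by omega⟩ ≤ σ i0 := by
    unfold singval eigval
    rw [hrev1]
    calc Real.sqrt ((hB.eigenvalues ∘ Tuple.sort hB.eigenvalues) ⟨p - r, by omega⟩)
        ≤ Real.sqrt (σ i0 ^ 2) := Real.sqrt_le_sqrt hlow
      _ = σ i0 := Real.sqrt_sq (le_of_lt (hpos i0))
  have hsv0 : σ i1 ≤ singval (Y * Yᵀ) ⟨0, by omega⟩ := by
    unfold singval eigval
    rw [hrev0]
    calc σ i1 = Real.sqrt (σ i1 ^ 2) := (Real.sqrt_sq (le_of_lt (hpos i1))).symm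
      _ ≤ Real.sqrt ((hB.eigenvalues ∘ Tuple.sort hB.eigenvalues) ⟨p - 1, by omega⟩) :=
          Real.sqrt_le_sqrt hhigh
  -- core inequalities
  have key_lower : 2 * σ i0 * frobSq A ≤ frobSq (Y * Aᵀ + A * Yᵀ) := by
    rw [frobA_eq, frobL_eq]
    have e1 : ∑ j, ∑ i, 2 * σ i0 * (S i j ^ 2 * (σ j)⁻¹) ≤ ∑ j, ∑ i, (S i j + S j i) ^ 2 := by
      apply Finset.sum_le_sum; intro j _
      apply Finset.sum_le_sum; intro i _
      exact term_lower (σ i0) (σ i) (σ j) (S i j) (S j i) (hpos i) (hpos j) (hpos i0)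
        (h0' i) (hsym i j)
    have e2 : ∑ j, ∑ k, 2 * σ i0 * (D k j ^ 2 * (σ j)⁻¹) ≤ ∑ j, ∑ k, 2 * D k j ^ 2 := by
      apply Finset.sum_le_sum; intro j _
      apply Finset.sum_le_sum; intro k _
      exact term_lower_D (σ i0) (σ j) (D k j) (hpos j) (hpos i0) (h0' j)
    have ps : ∀ (m : ℕ) (f : Fin m → Fin r → ℝ) (c : ℝ),
        c * (∑ j, ∑ i, f i j) = ∑ j, ∑ i, c * f i j := by
      intro m f c
      rw [Finset.mul_sum]; apply Finset.sum_congr rfl; intro j _; rw [Finset.mul_sum]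
    calc 2 * σ i0 * ((∑ j, ∑ i, S i j ^ 2 * (σ j)⁻¹) + ∑ j, ∑ k, D k j ^ 2 * (σ j)⁻¹)
        = (∑ j, ∑ i, 2 * σ i0 * (S i j ^ 2 * (σ j)⁻¹))
          + ∑ j, ∑ k, 2 * σ i0 * (D k j ^ 2 * (σ j)⁻¹) := by
          rw [mul_add, ps r (fun i j => S i j ^ 2 * (σ j)⁻¹) (2 * σ i0),
            ps (p - r) (fun k j => D k j ^ 2 * (σ j)⁻¹) (2 * σ i0)]
      _ ≤ (∑ j, ∑ i, (S i j + S j i) ^ 2) + ∑ j, ∑ k, 2 * D k j ^ 2 := add_le_add e1 e2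
      _ = (∑ j, ∑ i, (S i j + S j i) ^ 2) + 2 * ∑ j, ∑ k, D k j ^ 2 := by
          rw [ps (p - r) (fun k j => D k j ^ 2) 2]
  have key_upper : frobSq (Y * Aᵀ + A * Yᵀ) ≤ 4 * σ i1 * frobSq A := by
    rw [frobA_eq, frobL_eq]
    have e1 : ∑ j, ∑ i, (S i j + S j i) ^ 2
        ≤ ∑ j, ∑ i, (2 * σ i1 * (S i j ^ 2 * (σ j)⁻¹) + 2 * σ i1 * (S j i ^ 2 * (σ i)⁻¹)) := by
      apply Finset.sum_le_sum; intro j _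
      apply Finset.sum_le_sum; intro i _
      exact term_upper (σ i1) (σ i) (σ j) (S i j) (S j i) (hpos i) (hpos j)
        (h1' j) (h1' i) (hsym i j)
    have e2 : ∑ j, ∑ k, 2 * D k j ^ 2 ≤ ∑ j, ∑ k, 4 * σ i1 * (D k j ^ 2 * (σ j)⁻¹) := by
      apply Finset.sum_le_sum; intro j _
      apply Finset.sum_le_sum; intro k _
      exact term_upper_D (σ i1) (σ j) (D k j) (hpos j) (h1' j)
    have ps : ∀ (m : ℕ) (f : Fin m → Fin r → ℝ) (c : ℝ),
        c * (∑ j, ∑ i, f i j) = ∑ j, ∑ i, c * f i j := by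
      intro m f c
      rw [Finset.mul_sum]; apply Finset.sum_congr rfl; intro j _; rw [Finset.mul_sum]
    have swap : ∑ j, ∑ i, S j i ^ 2 * (σ i)⁻¹ = ∑ j, ∑ i, S i j ^ 2 * (σ j)⁻¹ :=
      Finset.sum_comm
    calc (∑ j, ∑ i, (S i j + S j i) ^ 2) + 2 * ∑ j, ∑ k, D k j ^ 2
        ≤ (∑ j, ∑ i, (2 * σ i1 * (S i j ^ 2 * (σ j)⁻¹) + 2 * σ i1 * (S j i ^ 2 * (σ i)⁻¹)))
          + ∑ j, ∑ k, 4 * σ i1 * (D k j ^ 2 * (σ j)⁻¹) := by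
          refine add_le_add e1 ?_
          calc 2 * ∑ j, ∑ k, D k j ^ 2 = ∑ j, ∑ k, 2 * D k j ^ 2 :=
                ps (p - r) (fun k j => D k j ^ 2) 2
            _ ≤ _ := e2
      _ = 2 * σ i1 * (∑ j, ∑ i, S i j ^ 2 * (σ j)⁻¹)
          + 2 * σ i1 * (∑ j, ∑ i, S j i ^ 2 * (σ i)⁻¹)
          + 4 * σ i1 * (∑ j, ∑ k, D k j ^ 2 * (σ j)⁻¹) := by
          rw [ps r (fun i j => S i j ^ 2 * (σ j)⁻¹) (2 * σ i1),
            ps r (fun i j => S j i ^ 2 * (σ i)⁻¹) (2 * σ i1),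
            ps (p - r) (fun k j => D k j ^ 2 * (σ j)⁻¹) (4 * σ i1)]
          congr 1
          rw [← Finset.sum_add_distrib]
          apply Finset.sum_congr rfl; intro j _
          rw [← Finset.sum_add_distrib]
      _ = 4 * σ i1 * ((∑ j, ∑ i, S i j ^ 2 * (σ j)⁻¹) + ∑ j, ∑ k, D k j ^ 2 * (σ j)⁻¹) := by
          rw [swap]; ring
  constructor
  · calc 2 * singval (Y * Yᵀ) ⟨r - 1, by omega⟩ * frobSq A
        ≤ 2 * σ i0 * frobSq A := by
          apply mul_le_mul_of_nonneg_right _ hfrobA_nonneg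
          linarith [hsv1]
      _ ≤ frobSq (Y * Aᵀ + A * Yᵀ) := key_lower
  · calc frobSq (Y * Aᵀ + A * Yᵀ) ≤ 4 * σ i1 * frobSq A := key_upper
      _ ≤ 4 * singval (Y * Yᵀ) ⟨0, by omega⟩ * frobSq A := by
          apply mul_le_mul_of_nonneg_right _ hfrobA_nonneg
          linarith [hsv0]
end

section
/- Let L ∈ ℝ^{p1×r}, R ∈ ℝ^{p2×r} with X = LRᵀ of rank r and compact SVD X = UΣVᵀ; set P1 = UᵀL, P2 = VᵀR. Define 𝒜_null^{L,R} = {[USP2^{-ᵀ}; −VSᵀP1^{-ᵀ}] : S ∈ ℝ^{r×r}} and 𝒜_n̄ull^{L,R} = {[(USP2P2ᵀ + U⊥D1)P2^{-ᵀ}; (VSᵀP1P1ᵀ + V⊥D2)P1^{-ᵀ}] : S ∈ ℝ^{r×r}, D1 ∈ ℝ^{(p1−r)×r}, D2 ∈ ℝ^{(p2−r)×r}}. Then these two subspaces of ℝ^{(p1+p2)×r} are orthogonal, have dimensions r² and (p1+p2−r)r respectively, and their direct sum is all of ℝ^{(p1+p2)×r}. -/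
open Matrix


lemma trace_tmul_nonneg {m n : Type*} [Fintype m] [Fintype n]
    (M : Matrix m n ℝ) : 0 ≤ (Mᵀ * M).trace := by
  classical
  simp only [Matrix.trace, Matrix.diag, Matrix.mul_apply, Matrix.transpose_apply]
  exact Finset.sum_nonneg fun j _ => Finset.sum_nonneg fun i _ => mul_self_nonneg _

lemma eq_zero_of_trace_tmul {m n : Type*} [Fintype m] [Fintype n]
    (M : Matrix m n ℝ) (h : (Mᵀ * M).trace = 0) : M = 0 := by
  classical
  simp only [Matrix.trace, Matrix.diag, Matrix.mul_apply, Matrix.transpose_apply] at h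
  ext i j
  have h1 := (Finset.sum_eq_zero_iff_of_nonneg
    (fun x _ => Finset.sum_nonneg fun i _ => mul_self_nonneg (M i x))).1 h j (Finset.mem_univ j)
  have h2 := (Finset.sum_eq_zero_iff_of_nonneg
    (fun i _ => mul_self_nonneg (M i j))).1 h1 i (Finset.mem_univ i)
  simpa [mul_self_eq_zero] using h2

noncomputable def fzero {p1 p2 r : ℕ}
    (U : Matrix (Fin p1) (Fin r) ℝ) (V : Matrix (Fin p2) (Fin r) ℝ)
    (Q1 Q2 : Matrix (Fin r) (Fin r) ℝ) :
    Matrix (Fin r) (Fin r) ℝ →ₗ[ℝ] Matrix (Fin p1) (Fin r) ℝ × Matrix (Fin p2) (Fin r) ℝ where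
  toFun S := (U * S * Q2, -(V * Sᵀ * Q1))
  map_add' S T := by
    simp [Matrix.add_mul, Matrix.mul_add, Matrix.transpose_add, Prod.ext_iff]
    abel
  map_smul' c S := by
    simp [Matrix.smul_mul, Matrix.mul_smul, Matrix.transpose_smul, Prod.ext_iff]

noncomputable def fone {p1 p2 r : ℕ}
    (U : Matrix (Fin p1) (Fin r) ℝ) (Uperp : Matrix (Fin p1) (Fin (p1 - r)) ℝ)
    (V : Matrix (Fin p2) (Fin r) ℝ) (Vperp : Matrix (Fin p2) (Fin (p2 - r)) ℝ)
    (G1 G2 Q1 Q2 : Matrix (Fin r) (Fin r) ℝ) :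
    (Matrix (Fin r) (Fin r) ℝ × Matrix (Fin (p1 - r)) (Fin r) ℝ × Matrix (Fin (p2 - r)) (Fin r) ℝ)
      →ₗ[ℝ] Matrix (Fin p1) (Fin r) ℝ × Matrix (Fin p2) (Fin r) ℝ where
  toFun x := ((U * (x.1 * G1) + Uperp * x.2.1) * Q2, (V * (x.1ᵀ * G2) + Vperp * x.2.2) * Q1)
  map_add' x y := by
    simp [Matrix.add_mul, Matrix.mul_add, Matrix.transpose_add, Prod.ext_iff]
    constructor <;> abel
  map_smul' c x := by
    simp [Matrix.smul_mul, Matrix.mul_smul, Matrix.transpose_smul, Prod.ext_iff, smul_add,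
      Matrix.add_mul]

section core
variable {p1 p2 r : ℕ}
  (U : Matrix (Fin p1) (Fin r) ℝ) (Uperp : Matrix (Fin p1) (Fin (p1 - r)) ℝ)
  (V : Matrix (Fin p2) (Fin r) ℝ) (Vperp : Matrix (Fin p2) (Fin (p2 - r)) ℝ)
  (P1 P2 : Matrix (Fin r) (Fin r) ℝ)

lemma ortho (hU : Uᵀ * U = 1) (hUUp : Uᵀ * Uperp = 0)
    (hV : Vᵀ * V = 1) (hVVp : Vᵀ * Vperp = 0)
    (hP1 : IsUnit P1.det) (hP2 : IsUnit P2.det)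
    (S S' : Matrix (Fin r) (Fin r) ℝ)
    (D1 : Matrix (Fin (p1 - r)) (Fin r) ℝ) (D2 : Matrix (Fin (p2 - r)) (Fin r) ℝ) :
    ((U * S * (P2⁻¹)ᵀ)ᵀ * ((U * (S' * (P2 * P2ᵀ)) + Uperp * D1) * (P2⁻¹)ᵀ)).trace
      + ((-(V * Sᵀ * (P1⁻¹)ᵀ))ᵀ * ((V * (S'ᵀ * (P1 * P1ᵀ)) + Vperp * D2) * (P1⁻¹)ᵀ)).trace
      = 0 := by
  have hU1 : ∀ {k : Type} [Fintype k] (X : Matrix (Fin r) k ℝ), Uᵀ * (U * X) = X := by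
    intro k _ X; rw [← Matrix.mul_assoc, hU, Matrix.one_mul]
  have hU0 : ∀ {k : Type} [Fintype k] (X : Matrix (Fin (p1-r)) k ℝ), Uᵀ * (Uperp * X) = 0 := by
    intro k _ X; rw [← Matrix.mul_assoc, hUUp, Matrix.zero_mul]
  have hV1 : ∀ {k : Type} [Fintype k] (X : Matrix (Fin r) k ℝ), Vᵀ * (V * X) = X := by
    intro k _ X; rw [← Matrix.mul_assoc, hV, Matrix.one_mul]
  have hV0 : ∀ {k : Type} [Fintype k] (X : Matrix (Fin (p2-r)) k ℝ), Vᵀ * (Vperp * X) = 0 := by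
    intro k _ X; rw [← Matrix.mul_assoc, hVVp, Matrix.zero_mul]
  have hP2t : P2ᵀ * (P2⁻¹)ᵀ = 1 := by
    rw [← transpose_mul, Matrix.nonsing_inv_mul _ hP2, transpose_one]
  have hP1t : P1ᵀ * (P1⁻¹)ᵀ = 1 := by
    rw [← transpose_mul, Matrix.nonsing_inv_mul _ hP1, transpose_one]
  have e1 : (U * S * (P2⁻¹)ᵀ)ᵀ * ((U * (S' * (P2 * P2ᵀ)) + Uperp * D1) * (P2⁻¹)ᵀ)
      = P2⁻¹ * (Sᵀ * (S' * P2)) := by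
    simp only [transpose_mul, Matrix.mul_add, Matrix.add_mul, Matrix.mul_assoc,
      transpose_transpose, hU1, hU0, Matrix.mul_zero, Matrix.zero_mul, add_zero, hP2t,
      Matrix.mul_one, mul_one]
  have e2 : (-(V * Sᵀ * (P1⁻¹)ᵀ))ᵀ * ((V * (S'ᵀ * (P1 * P1ᵀ)) + Vperp * D2) * (P1⁻¹)ᵀ)
      = -(P1⁻¹ * (S * (S'ᵀ * P1))) := by
    simp only [transpose_neg, Matrix.neg_mul, transpose_mul, Matrix.mul_add, Matrix.add_mul,
      Matrix.mul_assoc, transpose_transpose, hV1, hV0, Matrix.mul_zero, Matrix.zero_mul,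
      add_zero, neg_zero, hP1t, Matrix.mul_one, mul_one]
  rw [e1, e2, Matrix.trace_neg, Matrix.trace_mul_comm (P2⁻¹), Matrix.trace_mul_comm (P1⁻¹)]
  simp only [Matrix.mul_assoc, Matrix.mul_nonsing_inv _ hP2, Matrix.mul_nonsing_inv _ hP1,
    Matrix.mul_one]
  rw [← Matrix.trace_transpose (S * S'ᵀ), transpose_mul, transpose_transpose,
    Matrix.trace_mul_comm]
  ring

lemma extract0 (hU : Uᵀ * U = 1) (hP2 : IsUnit P2.det) (S : Matrix (Fin r) (Fin r) ℝ) :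
    Uᵀ * (U * S * (P2⁻¹)ᵀ) * P2ᵀ = S := by
  have h : (P2⁻¹)ᵀ * P2ᵀ = 1 := by
    rw [← transpose_mul, Matrix.mul_nonsing_inv _ hP2, transpose_one]
  have hU1 : ∀ X : Matrix (Fin r) (Fin r) ℝ, Uᵀ * (U * X) = X := by
    intro X; rw [← Matrix.mul_assoc, hU, Matrix.one_mul]
  simp only [Matrix.mul_assoc, h, Matrix.mul_one, hU1]

lemma extract1 (hU : Uᵀ * U = 1) (hUperp : Uperpᵀ * Uperp = 1) (hUUp : Uᵀ * Uperp = 0)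
    (hP2 : IsUnit P2.det) (S : Matrix (Fin r) (Fin r) ℝ)
    (D1 : Matrix (Fin (p1 - r)) (Fin r) ℝ) :
    Uᵀ * ((U * (S * (P2 * P2ᵀ)) + Uperp * D1) * (P2⁻¹)ᵀ) * P2ᵀ = S * (P2 * P2ᵀ)
    ∧ Uperpᵀ * ((U * (S * (P2 * P2ᵀ)) + Uperp * D1) * (P2⁻¹)ᵀ) * P2ᵀ = D1 := by
  have hUpU : Uperpᵀ * U = 0 := by
    have := congrArg Matrix.transpose hUUp
    rwa [transpose_mul, transpose_transpose, transpose_zero] at this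
  have h : (P2⁻¹)ᵀ * P2ᵀ = 1 := by
    rw [← transpose_mul, Matrix.mul_nonsing_inv _ hP2, transpose_one]
  have hU1 : ∀ X : Matrix (Fin r) (Fin r) ℝ, Uᵀ * (U * X) = X := by
    intro X; rw [← Matrix.mul_assoc, hU, Matrix.one_mul]
  have hU0 : ∀ X : Matrix (Fin (p1 - r)) (Fin r) ℝ, Uᵀ * (Uperp * X) = 0 := by
    intro X; rw [← Matrix.mul_assoc, hUUp, Matrix.zero_mul]
  have hUp1 : ∀ X : Matrix (Fin (p1 - r)) (Fin r) ℝ, Uperpᵀ * (Uperp * X) = X := by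
    intro X; rw [← Matrix.mul_assoc, hUperp, Matrix.one_mul]
  have hUp0 : ∀ X : Matrix (Fin r) (Fin r) ℝ, Uperpᵀ * (U * X) = 0 := by
    intro X; rw [← Matrix.mul_assoc, hUpU, Matrix.zero_mul]
  constructor <;>
    simp only [Matrix.add_mul, Matrix.mul_add, Matrix.mul_assoc, h, Matrix.mul_one,
      hU1, hU0, hUp1, hUp0, add_zero, zero_add]

lemma cancelG (hP2 : IsUnit P2.det) (S : Matrix (Fin r) (Fin r) ℝ)
    (h : S * (P2 * P2ᵀ) = 0) : S = 0 := by
  have h2 : IsUnit (P2 * P2ᵀ).det := by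
    rw [Matrix.det_mul, Matrix.det_transpose]; exact hP2.mul hP2
  calc S = S * ((P2 * P2ᵀ) * (P2 * P2ᵀ)⁻¹) := by
        rw [Matrix.mul_nonsing_inv _ h2, Matrix.mul_one]
    _ = S * (P2 * P2ᵀ) * (P2 * P2ᵀ)⁻¹ := by simp only [Matrix.mul_assoc]
    _ = 0 := by rw [h, Matrix.zero_mul]

lemma coprod_inj (hU : Uᵀ * U = 1) (hUperp : Uperpᵀ * Uperp = 1) (hUUp : Uᵀ * Uperp = 0)
    (hV : Vᵀ * V = 1) (hVperp : Vperpᵀ * Vperp = 1) (hVVp : Vᵀ * Vperp = 0)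
    (hP1 : IsUnit P1.det) (hP2 : IsUnit P2.det) :
    Function.Injective ((fzero U V (P1⁻¹)ᵀ (P2⁻¹)ᵀ).coprod
      (fone U Uperp V Vperp (P2 * P2ᵀ) (P1 * P1ᵀ) (P1⁻¹)ᵀ (P2⁻¹)ᵀ)) := by
  set g := (fzero U V (P1⁻¹)ᵀ (P2⁻¹)ᵀ).coprod
      (fone U Uperp V Vperp (P2 * P2ᵀ) (P1 * P1ᵀ) (P1⁻¹)ᵀ (P2⁻¹)ᵀ) with hg
  have key : ∀ z, g z = 0 → z = 0 := by
    rintro ⟨S, S', D1, D2⟩ hz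
    have h1 : U * S * (P2⁻¹)ᵀ + (U * (S' * (P2 * P2ᵀ)) + Uperp * D1) * (P2⁻¹)ᵀ = 0 :=
      congrArg Prod.fst hz
    have h2 : -(V * Sᵀ * (P1⁻¹)ᵀ) + (V * (S'ᵀ * (P1 * P1ᵀ)) + Vperp * D2) * (P1⁻¹)ᵀ = 0 :=
      congrArg Prod.snd hz
    have hA1 : U * S * (P2⁻¹)ᵀ = -((U * (S' * (P2 * P2ᵀ)) + Uperp * D1) * (P2⁻¹)ᵀ) :=
      eq_neg_of_add_eq_zero_left h1
    have hA2 : -(V * Sᵀ * (P1⁻¹)ᵀ) = -((V * (S'ᵀ * (P1 * P1ᵀ)) + Vperp * D2) * (P1⁻¹)ᵀ) :=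
      eq_neg_of_add_eq_zero_left h2
    have ht := ortho U Uperp V Vperp P1 P2 hU hUUp hV hVVp hP1 hP2 S S' D1 D2
    rw [hA1, hA2] at ht
    set B1 := (U * (S' * (P2 * P2ᵀ)) + Uperp * D1) * (P2⁻¹)ᵀ with hB1def
    set B2 := (V * (S'ᵀ * (P1 * P1ᵀ)) + Vperp * D2) * (P1⁻¹)ᵀ with hB2def
    rw [transpose_neg, transpose_neg, Matrix.neg_mul, Matrix.neg_mul, Matrix.trace_neg,
      Matrix.trace_neg] at ht
    have n1 := trace_tmul_nonneg B1
    have n2 := trace_tmul_nonneg B2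
    have hB1z : B1 = 0 := eq_zero_of_trace_tmul _ (by linarith)
    have hB2z : B2 = 0 := eq_zero_of_trace_tmul _ (by linarith)
    have hA1z : U * S * (P2⁻¹)ᵀ = 0 := by rw [hA1, hB1z, neg_zero]
    have hSz : S = 0 := by
      have := extract0 U P2 hU hP2 S
      rw [hA1z, Matrix.mul_zero, Matrix.zero_mul] at this
      exact this.symm
    have hex := extract1 U Uperp P2 hU hUperp hUUp hP2 S' D1
    simp only [← hB1def, hB1z, Matrix.mul_zero, Matrix.zero_mul] at hex
    have hS'z : S' = 0 := cancelG P2 hP2 S' hex.1.symm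
    have hD1z : D1 = 0 := hex.2.symm
    have hex2 := extract1 V Vperp P1 hV hVperp hVVp hP1 S'ᵀ D2
    simp only [← hB2def, hB2z, Matrix.mul_zero, Matrix.zero_mul] at hex2
    have hD2z : D2 = 0 := hex2.2.symm
    simp [hSz, hS'z, hD1z, hD2z, Prod.ext_iff]
  intro a b hab
  have h0 : g (a - b) = 0 := by rw [map_sub, hab, sub_self]
  exact sub_eq_zero.mp (key _ h0)

end core

theorem stmt15 {p1 p2 r : ℕ}
    (L : Matrix (Fin p1) (Fin r) ℝ) (R : Matrix (Fin p2) (Fin r) ℝ)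
    (hrank : (L * Rᵀ).rank = r)
    (U : Matrix (Fin p1) (Fin r) ℝ) (Uperp : Matrix (Fin p1) (Fin (p1 - r)) ℝ)
    (V : Matrix (Fin p2) (Fin r) ℝ) (Vperp : Matrix (Fin p2) (Fin (p2 - r)) ℝ)
    (Sg : Matrix (Fin r) (Fin r) ℝ)
    (hU : Uᵀ * U = 1) (hUperp : Uperpᵀ * Uperp = 1) (hUUp : Uᵀ * Uperp = 0)
    (hUcomp : U * Uᵀ + Uperp * Uperpᵀ = 1)
    (hV : Vᵀ * V = 1) (hVperp : Vperpᵀ * Vperp = 1) (hVVp : Vᵀ * Vperp = 0)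
    (hVcomp : V * Vᵀ + Vperp * Vperpᵀ = 1)
    (hdiag : ∀ i j, i ≠ j → Sg i j = 0) (hpos : ∀ i, 0 < Sg i i)
    (hrp1 : r ≤ p1) (hrp2 : r ≤ p2)
    (hSVD : L * Rᵀ = U * Sg * Vᵀ)
    (hP1 : IsUnit (Uᵀ * L).det) (hP2 : IsUnit (Vᵀ * R).det) :
    (∀ A ∈ {A : Matrix (Fin p1) (Fin r) ℝ × Matrix (Fin p2) (Fin r) ℝ |
          ∃ S : Matrix (Fin r) (Fin r) ℝ,
            A.1 = U * S * (((Vᵀ * R)⁻¹)ᵀ) ∧ A.2 = -(V * Sᵀ * (((Uᵀ * L)⁻¹)ᵀ))},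
      ∀ B ∈ {A : Matrix (Fin p1) (Fin r) ℝ × Matrix (Fin p2) (Fin r) ℝ |
          ∃ S : Matrix (Fin r) (Fin r) ℝ, ∃ D1 : Matrix (Fin (p1 - r)) (Fin r) ℝ,
            ∃ D2 : Matrix (Fin (p2 - r)) (Fin r) ℝ,
            A.1 = (U * (S * ((Vᵀ * R) * (Vᵀ * R)ᵀ)) + Uperp * D1) * (((Vᵀ * R)⁻¹)ᵀ) ∧
            A.2 = (V * (Sᵀ * ((Uᵀ * L) * (Uᵀ * L)ᵀ)) + Vperp * D2) * (((Uᵀ * L)⁻¹)ᵀ)},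
        (A.1ᵀ * B.1).trace + (A.2ᵀ * B.2).trace = 0) ∧
    Module.finrank ℝ (Submodule.span ℝ
        {A : Matrix (Fin p1) (Fin r) ℝ × Matrix (Fin p2) (Fin r) ℝ |
          ∃ S : Matrix (Fin r) (Fin r) ℝ,
            A.1 = U * S * (((Vᵀ * R)⁻¹)ᵀ) ∧ A.2 = -(V * Sᵀ * (((Uᵀ * L)⁻¹)ᵀ))}) = r ^ 2 ∧
    Module.finrank ℝ (Submodule.span ℝ
        {A : Matrix (Fin p1) (Fin r) ℝ × Matrix (Fin p2) (Fin r) ℝ |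
          ∃ S : Matrix (Fin r) (Fin r) ℝ, ∃ D1 : Matrix (Fin (p1 - r)) (Fin r) ℝ,
            ∃ D2 : Matrix (Fin (p2 - r)) (Fin r) ℝ,
            A.1 = (U * (S * ((Vᵀ * R) * (Vᵀ * R)ᵀ)) + Uperp * D1) * (((Vᵀ * R)⁻¹)ᵀ) ∧
            A.2 = (V * (Sᵀ * ((Uᵀ * L) * (Uᵀ * L)ᵀ)) + Vperp * D2) * (((Uᵀ * L)⁻¹)ᵀ)}) =
      (p1 + p2 - r) * r ∧
    ∀ M : Matrix (Fin p1) (Fin r) ℝ × Matrix (Fin p2) (Fin r) ℝ,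
      ∃! AB : (Matrix (Fin p1) (Fin r) ℝ × Matrix (Fin p2) (Fin r) ℝ) ×
          (Matrix (Fin p1) (Fin r) ℝ × Matrix (Fin p2) (Fin r) ℝ),
        (∃ S : Matrix (Fin r) (Fin r) ℝ,
          AB.1.1 = U * S * (((Vᵀ * R)⁻¹)ᵀ) ∧ AB.1.2 = -(V * Sᵀ * (((Uᵀ * L)⁻¹)ᵀ))) ∧
        (∃ S : Matrix (Fin r) (Fin r) ℝ, ∃ D1 : Matrix (Fin (p1 - r)) (Fin r) ℝ,
          ∃ D2 : Matrix (Fin (p2 - r)) (Fin r) ℝ,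
          AB.2.1 = (U * (S * ((Vᵀ * R) * (Vᵀ * R)ᵀ)) + Uperp * D1) * (((Vᵀ * R)⁻¹)ᵀ) ∧
          AB.2.2 = (V * (Sᵀ * ((Uᵀ * L) * (Uᵀ * L)ᵀ)) + Vperp * D2) * (((Uᵀ * L)⁻¹)ᵀ)) ∧
        M = AB.1 + AB.2 := by
  have hginj := coprod_inj U Uperp V Vperp (Uᵀ * L) (Vᵀ * R)
    hU hUperp hUUp hV hVperp hVVp hP1 hP2
  set f0 := fzero U V (((Uᵀ * L)⁻¹)ᵀ) (((Vᵀ * R)⁻¹)ᵀ) with hf0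
  set f1 := fone U Uperp V Vperp ((Vᵀ * R) * (Vᵀ * R)ᵀ) ((Uᵀ * L) * (Uᵀ * L)ᵀ)
    (((Uᵀ * L)⁻¹)ᵀ) (((Vᵀ * R)⁻¹)ᵀ) with hf1
  have hG : Function.Injective (f0.coprod f1) := hginj
  have hinj0 : Function.Injective f0 := by
    intro a b h
    have h2 : (f0.coprod f1) (a, 0) = (f0.coprod f1) (b, 0) := by
      simp only [LinearMap.coprod_apply, map_zero, add_zero, h]
    exact congrArg Prod.fst (hG h2)
  have hinj1 : Function.Injective f1 := by
    intro a b h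
    have h2 : (f0.coprod f1) (0, a) = (f0.coprod f1) (0, b) := by
      simp only [LinearMap.coprod_apply, map_zero, zero_add, h]
    exact congrArg Prod.snd (hG h2)
  have hset0 : {A : Matrix (Fin p1) (Fin r) ℝ × Matrix (Fin p2) (Fin r) ℝ |
          ∃ S : Matrix (Fin r) (Fin r) ℝ,
            A.1 = U * S * (((Vᵀ * R)⁻¹)ᵀ) ∧ A.2 = -(V * Sᵀ * (((Uᵀ * L)⁻¹)ᵀ))}
      = Set.range f0 := by
    ext A
    constructor
    · rintro ⟨S, h1, h2⟩
      exact ⟨S, Prod.ext h1.symm h2.symm⟩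
    · rintro ⟨S, rfl⟩
      exact ⟨S, rfl, rfl⟩
  have hset1 : {A : Matrix (Fin p1) (Fin r) ℝ × Matrix (Fin p2) (Fin r) ℝ |
          ∃ S : Matrix (Fin r) (Fin r) ℝ, ∃ D1 : Matrix (Fin (p1 - r)) (Fin r) ℝ,
            ∃ D2 : Matrix (Fin (p2 - r)) (Fin r) ℝ,
            A.1 = (U * (S * ((Vᵀ * R) * (Vᵀ * R)ᵀ)) + Uperp * D1) * (((Vᵀ * R)⁻¹)ᵀ) ∧
            A.2 = (V * (Sᵀ * ((Uᵀ * L) * (Uᵀ * L)ᵀ)) + Vperp * D2) * (((Uᵀ * L)⁻¹)ᵀ)}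
      = Set.range f1 := by
    ext A
    constructor
    · rintro ⟨S, D1, D2, h1, h2⟩
      exact ⟨(S, D1, D2), Prod.ext h1.symm h2.symm⟩
    · rintro ⟨⟨S, D1, D2⟩, rfl⟩
      exact ⟨S, D1, D2, rfl, rfl⟩
  refine ⟨?_, ?_, ?_, ?_⟩
  · rintro A ⟨S, hA1, hA2⟩ B ⟨S', D1, D2, hB1, hB2⟩
    rw [hA1, hA2, hB1, hB2]
    exact ortho U Uperp V Vperp (Uᵀ * L) (Vᵀ * R) hU hUUp hV hVVp hP1 hP2 S S' D1 D2
  · rw [hset0, ← LinearMap.coe_range, Submodule.span_eq,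
      LinearMap.finrank_range_of_inj hinj0]
    simp [Module.finrank_matrix]
    ring
  · rw [hset1, ← LinearMap.coe_range, Submodule.span_eq,
      LinearMap.finrank_range_of_inj hinj1]
    have e1 : p1 + p2 - r = r + ((p1 - r) + (p2 - r)) := by omega
    simp [Module.finrank_prod, Module.finrank_matrix, e1]
    ring
  · have hfineq : Module.finrank ℝ (Matrix (Fin r) (Fin r) ℝ ×
        (Matrix (Fin r) (Fin r) ℝ × Matrix (Fin (p1 - r)) (Fin r) ℝ ×
          Matrix (Fin (p2 - r)) (Fin r) ℝ))
        = Module.finrank ℝ (Matrix (Fin p1) (Fin r) ℝ × Matrix (Fin p2) (Fin r) ℝ) := by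
      have h1 : r * r + (p1 - r) * r = p1 * r := by
        rw [← Nat.add_mul, Nat.add_sub_cancel' hrp1]
      have h2 : r * r + (p2 - r) * r = p2 * r := by
        rw [← Nat.add_mul, Nat.add_sub_cancel' hrp2]
      simp [Module.finrank_prod, Module.finrank_matrix]
      rw [← h1, ← h2]
      ring
    have hsurj : Function.Surjective (f0.coprod f1) :=
      (LinearMap.injective_iff_surjective_of_finrank_eq_finrank hfineq).mp hG
    intro M
    obtain ⟨z, hz⟩ := hsurj M
    refine ⟨(f0 z.1, f1 z.2), ⟨⟨z.1, rfl, rfl⟩,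
      ⟨z.2.1, z.2.2.1, z.2.2.2, rfl, rfl⟩, hz.symm⟩, ?_⟩
    rintro ⟨⟨A1, A2⟩, ⟨B1, B2⟩⟩ ⟨⟨S0, hA1, hA2⟩, ⟨S1, D1, D2, hB1, hB2⟩, hMeq⟩
    have hA : (A1, A2) = f0 S0 := Prod.ext hA1 hA2
    have hB : (B1, B2) = f1 (S1, D1, D2) := Prod.ext hB1 hB2
    have hgz : (f0.coprod f1) (S0, (S1, D1, D2)) = M := by
      rw [hMeq, hA, hB]; rfl
    have hzz : (S0, (S1, D1, D2)) = z := hG (hgz.trans hz.symm)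
    rw [hA, hB, ← hzz]
end
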